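/- arXiv:2403.03907 — 7 statements merged into one kernel-verified Lean document; each statement's English description precedes it below -/
import Mathlib

section
/- Let 2 ≤ m ≤ n. The independence number of the m×n toroidal king's graph is α(K^t_{m×n}) = ⌊m/2⌋·⌊n/2⌋ if m or n is even, and α(K^t_{m×n}) = ⌊n·⌊m/2⌋/2⌋ if m and n are both odd. -/
open Finset SimpleGraph
open scoped Classical

namespace ChessGonality

variable {V : Type*} [Fintype V]

/-- The graph Laplacian applied to `f`: `(L f)(v) = deg(v) * f v - ∑_{w ~ v} f w`. -/
noncomputable def lap (G : SimpleGraph V) (f : V → ℤ) : V → ℤ :=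
  fun v => ∑ w : V, if G.Adj v w then f v - f w else 0

/-- A divisor is effective if it is nonnegative everywhere. -/
def Effective (D : V → ℤ) : Prop := ∀ v, 0 ≤ D v

/-- The degree of a divisor: the total number of chips. -/
noncomputable def divisorDeg (D : V → ℤ) : ℤ := ∑ v, D v

/-- Two divisors are linearly equivalent if they differ by a Laplacian image. -/
def LinEquiv (G : SimpleGraph V) (D D' : V → ℤ) : Prop :=
  ∃ f : V → ℤ, ∀ v, D v - D' v = lap G f v

/-- A divisor has positive rank if for every vertex there is an equivalent
effective divisor putting at least one chip there. -/
def PositiveRank (G : SimpleGraph V) (D : V → ℤ) : Prop :=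
  ∀ v : V, ∃ D' : V → ℤ, LinEquiv G D D' ∧ Effective D' ∧ 1 ≤ D' v

/-- The gonality of a graph: the minimum degree of an effective divisor of positive rank. -/
noncomputable def gonality (G : SimpleGraph V) : ℕ :=
  sInf {k : ℕ | ∃ D : V → ℤ, Effective D ∧ PositiveRank G D ∧ divisorDeg D = (k : ℤ)}

/-- The independence number of a graph. -/
noncomputable def indepNumber (G : SimpleGraph V) : ℕ :=
  sSup {k : ℕ | ∃ s : Finset V, (∀ a ∈ s, ∀ b ∈ s, a ≠ b → ¬ G.Adj a b) ∧ s.card = k}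

/-- A scramble: a nonempty collection of nonempty connected "eggs". -/
structure Scramble (G : SimpleGraph V) where
  eggs : Finset (Finset V)
  eggs_nonempty : eggs.Nonempty
  egg_nonempty : ∀ E ∈ eggs, E.Nonempty
  egg_connected : ∀ E ∈ eggs, (G.induce (E : Set V)).Connected

/-- A hitting set meets every egg. -/
def IsHittingSet {G : SimpleGraph V} (S : Scramble G) (H : Finset V) : Prop :=
  ∀ E ∈ S.eggs, (E ∩ H).Nonempty

/-- The hitting number of a scramble. -/
noncomputable def hittingNumber {G : SimpleGraph V} (S : Scramble G) : ℕ∞ :=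
  sInf {k : ℕ∞ | ∃ H : Finset V, IsHittingSet S H ∧ (H.card : ℕ∞) = k}

/-- An egg-cut: a set of edges whose removal leaves two eggs in different components. -/
def IsEggCut {G : SimpleGraph V} (S : Scramble G) (F : Finset (Sym2 V)) : Prop :=
  (F : Set (Sym2 V)) ⊆ G.edgeSet ∧
  ∃ A ∈ S.eggs, ∃ B ∈ S.eggs,
    (∀ a ∈ A, ∀ a' ∈ A, (G.deleteEdges (F : Set (Sym2 V))).Reachable a a') ∧
    (∀ b ∈ B, ∀ b' ∈ B, (G.deleteEdges (F : Set (Sym2 V))).Reachable b b') ∧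
    (∀ a ∈ A, ∀ b ∈ B, ¬ (G.deleteEdges (F : Set (Sym2 V))).Reachable a b)

/-- The egg-cut number of a scramble (`⊤` if there is no egg-cut). -/
noncomputable def eggCutNumber {G : SimpleGraph V} (S : Scramble G) : ℕ∞ :=
  sInf {k : ℕ∞ | ∃ F : Finset (Sym2 V), IsEggCut S F ∧ (F.card : ℕ∞) = k}

/-- The order of a scramble. -/
noncomputable def scrambleOrder {G : SimpleGraph V} (S : Scramble G) : ℕ∞ :=
  min (hittingNumber S) (eggCutNumber S)

/-- The scramble number of a graph: the maximum order of a scramble. -/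
noncomputable def scrambleNumber (G : SimpleGraph V) : ℕ∞ :=
  sSup {k : ℕ∞ | ∃ S : Scramble G, scrambleOrder S = k}

/-- The m×n king's graph. -/
def kingsGraph (m n : ℕ) : SimpleGraph (Fin m × Fin n) :=
  SimpleGraph.fromRel fun u v =>
    |(u.1.val : ℤ) - (v.1.val : ℤ)| ≤ 1 ∧ |(u.2.val : ℤ) - (v.2.val : ℤ)| ≤ 1

/-- The m×n bishop's graph. -/
def bishopsGraph (m n : ℕ) : SimpleGraph (Fin m × Fin n) :=
  SimpleGraph.fromRel fun u v =>
    |(u.1.val : ℤ) - (v.1.val : ℤ)| = |(u.2.val : ℤ) - (v.2.val : ℤ)|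

/-- The m×n knight's graph. -/
def knightsGraph (m n : ℕ) : SimpleGraph (Fin m × Fin n) :=
  SimpleGraph.fromRel fun u v =>
    (|(u.1.val : ℤ) - (v.1.val : ℤ)| = 1 ∧ |(u.2.val : ℤ) - (v.2.val : ℤ)| = 2) ∨
    (|(u.1.val : ℤ) - (v.1.val : ℤ)| = 2 ∧ |(u.2.val : ℤ) - (v.2.val : ℤ)| = 1)

/-- The m×n toroidal king's graph (vertices indexed by `Fin m × Fin n`,
adjacency computed modulo `m` and `n`). -/
def toroidalKingsGraph (m n : ℕ) : SimpleGraph (Fin m × Fin n) :=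
  SimpleGraph.fromRel fun u v =>
    ((u.1.val : ZMod m) - (v.1.val : ZMod m) ∈ ({-1, 0, 1} : Set (ZMod m))) ∧
    ((u.2.val : ZMod n) - (v.2.val : ZMod n) ∈ ({-1, 0, 1} : Set (ZMod n)))

/-- The m×n toroidal bishop's graph. -/
def toroidalBishopsGraph (m n : ℕ) : SimpleGraph (Fin m × Fin n) :=
  SimpleGraph.fromRel fun u v => ∃ k : ℤ,
    (u.1.val : ZMod m) - (v.1.val : ZMod m) = (k : ZMod m) ∧
    ((u.2.val : ZMod n) - (v.2.val : ZMod n) = (k : ZMod n) ∨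
      (u.2.val : ZMod n) - (v.2.val : ZMod n) = -(k : ZMod n))

/-- The m×n toroidal knight's graph. -/
def toroidalKnightsGraph (m n : ℕ) : SimpleGraph (Fin m × Fin n) :=
  SimpleGraph.fromRel fun u v =>
    (((u.1.val : ZMod m) - (v.1.val : ZMod m) = 1 ∨ (u.1.val : ZMod m) - (v.1.val : ZMod m) = -1) ∧
      ((u.2.val : ZMod n) - (v.2.val : ZMod n) = 2 ∨ (u.2.val : ZMod n) - (v.2.val : ZMod n) = -2)) ∨
    (((u.1.val : ZMod m) - (v.1.val : ZMod m) = 2 ∨ (u.1.val : ZMod m) - (v.1.val : ZMod m) = -2) ∧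
      ((u.2.val : ZMod n) - (v.2.val : ZMod n) = 1 ∨ (u.2.val : ZMod n) - (v.2.val : ZMod n) = -1))

/-- The white component of the bishop's graph: squares `(i,j)` with `i+j` even
(in the 1-based labelling of the paper; parity is unchanged by 0-based indexing). -/
noncomputable def bishopsWhite (m n : ℕ) :=
  (bishopsGraph m n).induce {v : Fin m × Fin n | Even (v.1.val + v.2.val)}

/-- The black component of the bishop's graph: squares `(i,j)` with `i+j` odd. -/
noncomputable def bishopsBlack (m n : ℕ) :=
  (bishopsGraph m n).induce {v : Fin m × Fin n | Odd (v.1.val + v.2.val)}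

/-- The d-diagonal through a vertex of the toroidal board. -/
def dDiagonal (m n : ℕ) (u : ZMod m × ZMod n) : Set (ZMod m × ZMod n) :=
  {p | ∃ k : ℤ, p.1 = u.1 + (k : ZMod m) ∧ p.2 = u.2 + (k : ZMod n)}

/-- The s-diagonal through a vertex of the toroidal board. -/
def sDiagonal (m n : ℕ) (u : ZMod m × ZMod n) : Set (ZMod m × ZMod n) :=
  {p | ∃ k : ℤ, p.1 = u.1 + (k : ZMod m) ∧ p.2 = u.2 - (k : ZMod n)}


set_option maxHeartbeats 1000000


def IndepOn {W : Type*} (G : SimpleGraph W) (s : Finset W) : Prop :=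
  ∀ a ∈ s, ∀ b ∈ s, a ≠ b → ¬ G.Adj a b

lemma IndepOn.subset {W : Type*} {G : SimpleGraph W} {s t : Finset W}
    (h : IndepOn G s) (hts : t ⊆ s) : IndepOn G t :=
  fun a ha b hb hab => h a (hts ha) b (hts hb) hab

lemma neg_mem_pm {R : Type*} [CommRing R] {x : R} (h : x ∈ ({-1, 0, 1} : Set R)) :
    -x ∈ ({-1, 0, 1} : Set R) := by
  simp only [Set.mem_insert_iff, Set.mem_singleton_iff] at h ⊢
  rcases h with h | h | h <;> rw [h] <;> simp

lemma tkg_adj {m n : ℕ} (u v : Fin m × Fin n) :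
    (toroidalKingsGraph m n).Adj u v ↔ u ≠ v ∧
      ((u.1.val : ZMod m) - (v.1.val : ZMod m) ∈ ({-1, 0, 1} : Set (ZMod m))) ∧
      ((u.2.val : ZMod n) - (v.2.val : ZMod n) ∈ ({-1, 0, 1} : Set (ZMod n))) := by
  constructor
  · rintro ⟨hne, h | h⟩
    · exact ⟨hne, h⟩
    · refine ⟨hne, ?_, ?_⟩
      · have := neg_mem_pm h.1; rwa [neg_sub] at this
      · have := neg_mem_pm h.2; rwa [neg_sub] at this
  · rintro ⟨hne, h1, h2⟩; exact ⟨hne, Or.inl ⟨h1, h2⟩⟩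

lemma modeq_small {N a b : ℕ} (ha : a ≤ N) (hb : b < N) :
    a ≡ b [MOD N] ↔ (a = b ∨ (a = N ∧ b = 0)) := by
  rcases eq_or_lt_of_le ha with rfl | h
  · unfold Nat.ModEq
    rw [Nat.mod_self, Nat.mod_eq_of_lt hb]
    omega
  · unfold Nat.ModEq
    rw [Nat.mod_eq_of_lt h, Nat.mod_eq_of_lt hb]
    omega

/-- near in terms of nat values, for values below the modulus -/
lemma near_iff {N : ℕ} (hN : 2 ≤ N) {x y : ℕ} (hx : x < N) (hy : y < N) :
    ((x : ZMod N) - (y : ZMod N) ∈ ({-1, 0, 1} : Set (ZMod N))) ↔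
      (x = y ∨ x + 1 = y ∨ y + 1 = x ∨ (x = 0 ∧ y + 1 = N) ∨ (y = 0 ∧ x + 1 = N)) := by
  have e0 : ((x : ZMod N) - y = 0) ↔ x = y := by
    rw [sub_eq_zero, ZMod.natCast_eq_natCast_iff]
    unfold Nat.ModEq
    rw [Nat.mod_eq_of_lt hx, Nat.mod_eq_of_lt hy]
  have em : ((x : ZMod N) - y = -1) ↔ (x + 1 = y ∨ (y = 0 ∧ x + 1 = N)) := by
    have : ((x : ZMod N) - y = -1) ↔ ((x + 1 : ℕ) : ZMod N) = (y : ZMod N) := by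
      push_cast
      constructor <;> intro h <;> linear_combination h
    rw [this, ZMod.natCast_eq_natCast_iff, modeq_small (by omega) hy]
    omega
  have ep : ((x : ZMod N) - y = 1) ↔ (y + 1 = x ∨ (x = 0 ∧ y + 1 = N)) := by
    have : ((x : ZMod N) - y = 1) ↔ ((y + 1 : ℕ) : ZMod N) = (x : ZMod N) := by
      push_cast
      constructor <;> intro h <;> linear_combination -h
    rw [this, ZMod.natCast_eq_natCast_iff, modeq_small (by omega) hx]
    omega
  simp only [Set.mem_insert_iff, Set.mem_singleton_iff]
  rw [e0, em, ep]
  tauto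

/-- near in terms of divisibility (values need not be reduced) -/
lemma near_to_dvd {N : ℕ} {x y : ℕ}
    (h : ((x : ZMod N) - (y : ZMod N) ∈ ({-1, 0, 1} : Set (ZMod N)))) :
    ∃ e : ℤ, (-1 ≤ e ∧ e ≤ 1) ∧ (N : ℤ) ∣ ((x : ℤ) - (y : ℤ) + e) := by
  simp only [Set.mem_insert_iff, Set.mem_singleton_iff] at h
  rcases h with h | h | h
  · refine ⟨1, by omega, ?_⟩
    rw [← ZMod.intCast_zmod_eq_zero_iff_dvd]
    push_cast
    linear_combination h
  · refine ⟨0, by omega, ?_⟩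
    rw [← ZMod.intCast_zmod_eq_zero_iff_dvd]
    push_cast
    linear_combination h
  · refine ⟨-1, by omega, ?_⟩
    rw [← ZMod.intCast_zmod_eq_zero_iff_dvd]
    push_cast
    linear_combination h

lemma int_dvd_cases {N : ℕ} (hN : 0 < N) {d : ℤ} (h : (N : ℤ) ∣ d)
    (hlo : -(N:ℤ) ≤ d) (hhi : d ≤ N) :
    d = -N ∨ d = 0 ∨ d = N := by
  obtain ⟨t, rfl⟩ := h
  have hN' : (0:ℤ) < N := by exact_mod_cast hN
  have hb' : -(N:ℤ) ≤ (N:ℤ) * t ∧ (N:ℤ) * t ≤ N := ⟨hlo, hhi⟩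
  have ht1 : t ≤ 1 := le_of_mul_le_mul_left (by linarith [hb'.2]) hN'
  have ht2 : -1 ≤ t := le_of_mul_le_mul_left (by linarith [hb'.1]) hN'
  have ht : t = -1 ∨ t = 0 ∨ t = 1 := by omega
  rcases ht with rfl | rfl | rfl <;> simp

lemma indepNumber_eq_of {W : Type*} [Fintype W] (G : SimpleGraph W) (k : ℕ)
    (hex : ∃ s : Finset W, (∀ a ∈ s, ∀ b ∈ s, a ≠ b → ¬ G.Adj a b) ∧ s.card = k)
    (hub : ∀ s : Finset W, (∀ a ∈ s, ∀ b ∈ s, a ≠ b → ¬ G.Adj a b) → s.card ≤ k) :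
    sSup {k : ℕ | ∃ s : Finset W, (∀ a ∈ s, ∀ b ∈ s, a ≠ b → ¬ G.Adj a b) ∧ s.card = k} = k := by
  apply le_antisymm
  · apply csSup_le ⟨k, hex⟩
    rintro x ⟨s, hs, rfl⟩
    exact hub s hs
  · exact le_csSup ⟨k, by rintro x ⟨s, hs, rfl⟩; exact hub s hs⟩ hex



lemma spread_card {N : ℕ} (hN : 2 ≤ N) (T : Finset (ZMod N))
    (h : ∀ x ∈ T, ∀ y ∈ T, x - y ≠ 1) : 2 * T.card ≤ N := by
  haveI : NeZero N := ⟨by omega⟩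
  haveI : Fact (1 < N) := ⟨by omega⟩
  have hdisj : Disjoint T (T.image (· + 1)) := by
    rw [Finset.disjoint_left]
    intro z hz hz'
    obtain ⟨y, hy, rfl⟩ := Finset.mem_image.mp hz'
    exact h _ hz _ hy (by ring)
  have hcard : (T ∪ T.image (· + 1)).card = 2 * T.card := by
    rw [Finset.card_union_of_disjoint hdisj,
      Finset.card_image_of_injective _ (add_left_injective 1)]
    omega
  have := Finset.card_le_univ (T ∪ T.image (· + 1))
  rw [hcard] at this
  simpa [ZMod.card] using this

lemma two_col_card {m n : ℕ} (hm : 2 ≤ m) (s : Finset (Fin m × Fin n))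
    (hs : IndepOn (toroidalKingsGraph m n) s) (c : ZMod n) :
    (s.filter (fun v => (v.2.val : ZMod n) = c ∨ (v.2.val : ZMod n) = c + 1)).card ≤ m / 2 := by
  haveI : NeZero m := ⟨by omega⟩
  haveI : Fact (1 < m) := ⟨by omega⟩
  set t := s.filter (fun v => (v.2.val : ZMod n) = c ∨ (v.2.val : ZMod n) = c + 1) with ht
  have hcol : ∀ v ∈ t, ∀ w ∈ t,
      ((v.2.val : ZMod n) - (w.2.val : ZMod n) ∈ ({-1, 0, 1} : Set (ZMod n))) := by
    intro v hv w hw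
    have h1 := (Finset.mem_filter.mp hv).2
    have h2 := (Finset.mem_filter.mp hw).2
    simp only [Set.mem_insert_iff, Set.mem_singleton_iff]
    rcases h1 with h1 | h1 <;> rcases h2 with h2 | h2 <;> rw [h1, h2]
    · right; left; ring
    · left; ring
    · right; right; ring
    · right; left; ring
  have hrow : ∀ v ∈ t, ∀ w ∈ t,
      ((v.1.val : ZMod m) - (w.1.val : ZMod m) ∈ ({-1, 0, 1} : Set (ZMod m))) → v = w := by
    intro v hv w hw hnear
    by_contra hne
    exact hs v (Finset.mem_filter.mp hv).1 w (Finset.mem_filter.mp hw).1 hne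
      ((tkg_adj v w).mpr ⟨hne, hnear, hcol v hv w hw⟩)
  have hinj : Set.InjOn (fun v : Fin m × Fin n => (v.1.val : ZMod m)) t := by
    intro v hv w hw hvw
    exact hrow v hv w hw (by simp only at hvw; rw [hvw]; simp)
  rw [← Finset.card_image_of_injOn hinj]
  have hle := spread_card hm (t.image (fun v => (v.1.val : ZMod m))) ?_
  · omega
  · intro x hx y hy hxy
    obtain ⟨v, hv, rfl⟩ := Finset.mem_image.mp hx
    obtain ⟨w, hw, rfl⟩ := Finset.mem_image.mp hy
    have : v = w := hrow v hv w hw (by rw [hxy]; simp)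
    subst this
    simp at hxy

lemma sum_two_col {m n : ℕ} [NeZero n] (hn : 2 ≤ n) (s : Finset (Fin m × Fin n)) :
    ∑ c : ZMod n, (s.filter
        (fun v => (v.2.val : ZMod n) = c ∨ (v.2.val : ZMod n) = c + 1)).card
      = 2 * s.card := by
  haveI : Fact (1 < n) := ⟨by omega⟩
  simp only [Finset.card_filter]
  rw [Finset.sum_comm]
  have hinner : ∀ v ∈ s, (∑ c : ZMod n,
      if ((v.2.val : ZMod n) = c ∨ (v.2.val : ZMod n) = c + 1) then 1 else 0) = 2 := by
    intro v _
    rw [← Finset.card_filter]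
    have : (Finset.univ.filter
        (fun c : ZMod n => (v.2.val : ZMod n) = c ∨ (v.2.val : ZMod n) = c + 1))
        = {(v.2.val : ZMod n), (v.2.val : ZMod n) - 1} := by
      ext c
      simp only [Finset.mem_filter, Finset.mem_univ, true_and, Finset.mem_insert,
        Finset.mem_singleton]
      constructor
      · rintro (h | h)
        · exact Or.inl h.symm
        · right; rw [h]; ring
      · rintro (rfl | rfl)
        · exact Or.inl rfl
        · right; ring
    rw [this]
    have hne : (v.2.val : ZMod n) ∉ ({(v.2.val : ZMod n) - 1} : Finset (ZMod n)) := by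
      rw [Finset.mem_singleton]
      intro h
      exact one_ne_zero (sub_eq_self.mp h.symm)
    rw [Finset.card_insert_of_notMem hne, Finset.card_singleton]
  rw [Finset.sum_congr rfl hinner, Finset.sum_const, smul_eq_mul, mul_comm]

lemma card_le_ub {m n : ℕ} (hm : 2 ≤ m) (hn : 2 ≤ n) (s : Finset (Fin m × Fin n))
    (hs : IndepOn (toroidalKingsGraph m n) s) : s.card ≤ n * (m / 2) / 2 := by
  haveI : NeZero n := ⟨by omega⟩
  have h1 := sum_two_col hn s
  have h2 : ∑ c : ZMod n, (s.filter
        (fun v => (v.2.val : ZMod n) = c ∨ (v.2.val : ZMod n) = c + 1)).card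
      ≤ ∑ _c : ZMod n, (m / 2) :=
    Finset.sum_le_sum (fun c _ => two_col_card hm s hs c)
  rw [Finset.sum_const, Finset.card_univ, ZMod.card, smul_eq_mul] at h2
  have h3 : 2 * s.card ≤ n * (m / 2) := by omega
  omega

lemma swap_indep {m n : ℕ} (s : Finset (Fin m × Fin n))
    (hs : IndepOn (toroidalKingsGraph m n) s) :
    IndepOn (toroidalKingsGraph n m) (s.image Prod.swap) ∧
      (s.image Prod.swap).card = s.card := by
  constructor
  · intro a ha b hb hab hadj
    obtain ⟨u, hu, rfl⟩ := Finset.mem_image.mp ha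
    obtain ⟨v, hv, rfl⟩ := Finset.mem_image.mp hb
    have huv : u ≠ v := fun h => hab (by rw [h])
    rw [tkg_adj] at hadj
    exact hs u hu v hv huv ((tkg_adj u v).mpr ⟨huv, hadj.2.2, hadj.2.1⟩)
  · exact Finset.card_image_of_injective _ Prod.swap_injective

lemma constructionE {m n : ℕ} (hm : 2 ≤ m) (hn : 2 ≤ n) :
    ∃ s : Finset (Fin m × Fin n), IndepOn (toroidalKingsGraph m n) s ∧
      s.card = (m / 2) * (n / 2) := by
  have hg1 : ∀ p : Fin (m/2) × Fin (n/2), 2 * p.1.val < m := by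
    intro p; have := p.1.isLt; omega
  have hg2 : ∀ p : Fin (m/2) × Fin (n/2), 2 * p.2.val < n := by
    intro p; have := p.2.isLt; omega
  set g : Fin (m/2) × Fin (n/2) → Fin m × Fin n :=
    fun p => (⟨2 * p.1.val, hg1 p⟩, ⟨2 * p.2.val, hg2 p⟩) with hg
  have hinj : Function.Injective g := by
    intro p q hpq
    rw [Prod.ext_iff] at hpq
    have h1 : 2 * p.1.val = 2 * q.1.val := congrArg Fin.val hpq.1
    have h2 : 2 * p.2.val = 2 * q.2.val := congrArg Fin.val hpq.2
    exact Prod.ext (Fin.ext (by omega)) (Fin.ext (by omega))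
  refine ⟨Finset.image g Finset.univ, ?_, ?_⟩
  · intro x hx y hy hne hadj
    obtain ⟨p, _, rfl⟩ := Finset.mem_image.mp hx
    obtain ⟨q, _, rfl⟩ := Finset.mem_image.mp hy
    rw [tkg_adj] at hadj
    obtain ⟨-, hrow, hcol⟩ := hadj
    have hp1 := p.1.isLt; have hp2 := p.2.isLt
    have hq1 := q.1.isLt; have hq2 := q.2.isLt
    have hrow' := (near_iff hm (hg1 p) (hg1 q)).mp hrow
    have hcol' := (near_iff hn (hg2 p) (hg2 q)).mp hcol
    have e1 : p.1.val = q.1.val := by omega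
    have e2 : p.2.val = q.2.val := by omega
    exact hne (congrArg g (Prod.ext (Fin.ext e1) (Fin.ext e2)))
  · rw [Finset.card_image_of_injective _ hinj, Finset.card_univ, Fintype.card_prod,
      Fintype.card_fin, Fintype.card_fin]

lemma constructionF {m a n : ℕ} (hma : m = 2 * a + 1) (ha2 : 2 ≤ a) (hae : 2 ∣ a)
    (hno : ¬ 2 ∣ n) (hmn : m ≤ n) :
    ∃ s : Finset (Fin m × Fin n), IndepOn (toroidalKingsGraph m n) s ∧
      s.card = (a / 2) * n := by
  have hm0 : 0 < m := by omega
  have hn2 : 2 ≤ n := by omega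
  have hm2 : 2 ≤ m := by omega
  set g : Fin (a/2) × Fin n → Fin m × Fin n :=
    fun p => (⟨(4 * p.1.val + 2 * min p.2.val (n + m - p.2.val)) % m,
      Nat.mod_lt _ hm0⟩, p.2) with hg
  have hinj : Function.Injective g := by
    intro p q hpq
    rw [Prod.ext_iff] at hpq
    have h2 : p.2 = q.2 := hpq.2
    have h1 : (4 * p.1.val + 2 * min p.2.val (n + m - p.2.val)) % m
        = (4 * q.1.val + 2 * min q.2.val (n + m - q.2.val)) % m := congrArg Fin.val hpq.1
    rw [h2] at h1
    have hmod : (4 * p.1.val + 2 * min q.2.val (n + m - q.2.val))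
        ≡ (4 * q.1.val + 2 * min q.2.val (n + m - q.2.val)) [MOD m] := h1
    have hdvd := hmod.dvd
    have hb1 : (q.2.val : ℤ) ≤ (n:ℤ) + m := by have := q.2.isLt; push_cast; omega
    push_cast [Nat.cast_sub (show q.2.val ≤ n + m by have := q.2.isLt; omega)] at hdvd
    have hp1 := p.1.isLt; have hq1 := q.1.isLt
    have hcases := int_dvd_cases hm0 hdvd (by push_cast; omega) (by push_cast; omega)
    have : p.1.val = q.1.val := by push_cast at hcases; omega
    exact Prod.ext (Fin.ext this) h2
  refine ⟨Finset.image g Finset.univ, ?_, ?_⟩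
  · intro x hx y hy hne hadj
    obtain ⟨p, -, rfl⟩ := Finset.mem_image.mp hx
    obtain ⟨q, -, rfl⟩ := Finset.mem_image.mp hy
    rw [tkg_adj] at hadj
    obtain ⟨-, hrow, hcol⟩ := hadj
    have hp1 := p.1.isLt; have hp2 := p.2.isLt
    have hq1 := q.1.isLt; have hq2 := q.2.isLt
    have hcol' := (near_iff hn2 hp2 hq2).mp hcol
    simp only [hg] at hrow
    rw [ZMod.natCast_mod, ZMod.natCast_mod] at hrow
    obtain ⟨e, he, hdvd⟩ := near_to_dvd hrow
    push_cast [Nat.cast_sub (show p.2.val ≤ n + m by omega),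
      Nat.cast_sub (show q.2.val ≤ n + m by omega)] at hdvd
    -- now hdvd : (m:ℤ) ∣ 4 p1 + 2 min(p2, n+m-p2) - (4 q1 + 2 min(q2, n+m-q2)) + e
    rcases hcol' with hc | hc | hc | hc | hc
    · -- same column
      have hσ : min (p.2.val:ℤ) ((n:ℤ) + m - p.2.val) = min (q.2.val:ℤ) ((n:ℤ) + m - q.2.val) := by
        rw [show (p.2.val:ℤ) = (q.2.val:ℤ) from by exact_mod_cast hc]
      have hcases := int_dvd_cases hm0 hdvd (by push_cast; omega) (by push_cast; omega)
      have hk : p.1.val = q.1.val := by push_cast at hcases; omega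
      exact hne (congrArg g (Prod.ext (Fin.ext hk) (Fin.ext hc)))
    · -- p col + 1 = q col
      have hcases := int_dvd_cases hm0 hdvd (by push_cast; omega) (by push_cast; omega)
      push_cast at hcases
      omega
    · have hcases := int_dvd_cases hm0 hdvd (by push_cast; omega) (by push_cast; omega)
      push_cast at hcases
      omega
    · -- wrap : p col = 0, q col = n - 1
      have hdvd2 : (m:ℤ) ∣ (4 * p.1.val + 2 * min (p.2.val:ℤ) ((n:ℤ) + m - p.2.val)
          - (4 * q.1.val + 2 * min (q.2.val:ℤ) ((n:ℤ) + m - q.2.val)) + e) + 2 * m :=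
        dvd_add hdvd ⟨2, by ring⟩
      have hcases := int_dvd_cases hm0 hdvd2 (by push_cast; omega) (by push_cast; omega)
      push_cast at hcases
      omega
    · have hdvd2 : (m:ℤ) ∣ (4 * p.1.val + 2 * min (p.2.val:ℤ) ((n:ℤ) + m - p.2.val)
          - (4 * q.1.val + 2 * min (q.2.val:ℤ) ((n:ℤ) + m - q.2.val)) + e) - 2 * m :=
        dvd_sub hdvd ⟨2, by ring⟩
      have hcases := int_dvd_cases hm0 hdvd2 (by push_cast; omega) (by push_cast; omega)
      push_cast at hcases
      omega
  · rw [Finset.card_image_of_injective _ hinj, Finset.card_univ, Fintype.card_prod,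
      Fintype.card_fin, Fintype.card_fin]

lemma addmod {n x c : ℕ} (hx : x < n) (hc : c < n) :
    (x + c) % n = x + c ∨ (x + c) % n + n = x + c := by
  rcases Nat.lt_or_ge (x + c) n with h | h
  · left; exact Nat.mod_eq_of_lt h
  · right
    rw [Nat.mod_eq_sub_mod h, Nat.mod_eq_of_lt (by omega)]
    omega

lemma rotate_exists {m n : ℕ} (hn : 2 ≤ n) (s : Finset (Fin m × Fin n))
    (hs : IndepOn (toroidalKingsGraph m n) s) (j : ℕ) (hj : j < n) :
    ∃ t : Finset (Fin m × Fin n), IndepOn (toroidalKingsGraph m n) t ∧ t.card = s.card ∧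
      (t.filter (fun v => v.2.val = n - 1)).card = (s.filter (fun v => v.2.val = j)).card ∧
      (t.filter (fun v => v.2.val = 0)).card
        = (s.filter (fun v => v.2.val = (if j + 1 = n then 0 else j + 1))).card := by
  classical
  have hn0 : 0 < n := by omega
  obtain ⟨c, hc⟩ : ∃ c, c = n - 1 - j := ⟨_, rfl⟩
  have hcn : c < n := by omega
  set r : Fin m × Fin n → Fin m × Fin n :=
    fun v => (v.1, ⟨(v.2.val + c) % n, Nat.mod_lt _ hn0⟩) with hr
  have hrval : ∀ v : Fin m × Fin n, (r v).2.val = (v.2.val + c) % n := fun v => rfl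
  have hinj : Function.Injective r := by
    intro u v huv
    rw [Prod.ext_iff] at huv
    have h2 : (u.2.val + c) % n = (v.2.val + c) % n := congrArg Fin.val huv.2
    have hu2 := u.2.isLt; have hv2 := v.2.isLt
    have ha1 := addmod hu2 hcn
    have ha2 := addmod hv2 hcn
    exact Prod.ext huv.1 (Fin.ext (by omega))
  have hcast : ∀ v : Fin m × Fin n,
      (((v.2.val + c) % n : ℕ) : ZMod n) = (v.2.val : ZMod n) + (c : ZMod n) := by
    intro v; rw [ZMod.natCast_mod]; push_cast; ring
  have key : ∀ d jj : ℕ, (∀ x : ℕ, x < n → ((x + c) % n = d ↔ x = jj)) →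
      (s.image r).filter (fun v => v.2.val = d)
        = (s.filter (fun v => v.2.val = jj)).image r := by
    intro d jj hiff
    ext v
    simp only [Finset.mem_filter, Finset.mem_image]
    constructor
    · rintro ⟨⟨u, hu, rfl⟩, hd⟩
      rw [hrval u] at hd
      exact ⟨u, ⟨hu, (hiff u.2.val u.2.isLt).mp hd⟩, rfl⟩
    · rintro ⟨u, ⟨hu, hujj⟩, rfl⟩
      refine ⟨⟨u, hu, rfl⟩, ?_⟩
      rw [hrval u]
      exact (hiff u.2.val u.2.isLt).mpr hujj
  refine ⟨s.image r, ?_, Finset.card_image_of_injective _ hinj, ?_, ?_⟩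
  · intro x hx y hy hne hadj
    obtain ⟨u, hu, rfl⟩ := Finset.mem_image.mp hx
    obtain ⟨v, hv, rfl⟩ := Finset.mem_image.mp hy
    have huv : u ≠ v := fun h => hne (by rw [h])
    rw [tkg_adj] at hadj
    refine hs u hu v hv huv ((tkg_adj u v).mpr ⟨huv, hadj.2.1, ?_⟩)
    have hcc := hadj.2.2
    have hxv : ((r u).2.val : ZMod n) = (u.2.val : ZMod n) + (c : ZMod n) := by
      rw [hrval u]; exact hcast u
    have hyv : ((r v).2.val : ZMod n) = (v.2.val : ZMod n) + (c : ZMod n) := by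
      rw [hrval v]; exact hcast v
    rw [hxv, hyv] at hcc
    have heq : ((u.2.val : ZMod n) + (c : ZMod n)) - ((v.2.val : ZMod n) + (c : ZMod n))
        = (u.2.val : ZMod n) - (v.2.val : ZMod n) := by ring
    rwa [heq] at hcc
  · rw [key (n-1) j ?_, Finset.card_image_of_injective _ hinj]
    intro x hx
    rcases addmod hx hcn with h | h <;> omega
  · rw [key 0 (if j + 1 = n then 0 else j + 1) ?_, Finset.card_image_of_injective _ hinj]
    intro x hx
    have hmod := addmod hx hcn
    by_cases hjn : j + 1 = n
    · rw [if_pos hjn]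
      show (x + c) % n = 0 ↔ x = 0
      omega
    · rw [if_neg hjn]
      have hblt : (x + c) % n < n := Nat.mod_lt _ hn0
      show (x + c) % n = 0 ↔ x = j + 1
      omega

lemma exists_heavy {m n : ℕ} (hn : 2 ≤ n) (s : Finset (Fin m × Fin n)) (b : ℕ)
    (hb : n * b < 2 * s.card) :
    ∃ j, j < n ∧ b < (s.filter (fun v => v.2.val = j)).card
      + (s.filter (fun v => v.2.val = (if j + 1 = n then 0 else j + 1))).card := by
  classical
  set w : ℕ → ℕ := fun j => (s.filter (fun v => v.2.val = j)).card with hw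
  have hsum : ∑ j ∈ Finset.range n, w j = s.card :=
    (Finset.card_eq_sum_card_fiberwise
      (fun (v : Fin m × Fin n) (_ : v ∈ s) => Finset.mem_range.mpr v.2.isLt)).symm
  obtain ⟨K, rfl⟩ : ∃ K, n = K + 1 := ⟨n - 1, by omega⟩
  by_contra hcon
  push_neg at hcon
  have hle : ∀ j ∈ Finset.range (K+1),
      w j + w (if j + 1 = K + 1 then 0 else j + 1) ≤ b :=
    fun j hj => hcon j (Finset.mem_range.mp hj)
  have h2 : ∑ j ∈ Finset.range (K+1), (w j + w (if j + 1 = K+1 then 0 else j + 1))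
      ≤ (K+1) * b := by
    calc ∑ j ∈ Finset.range (K+1), (w j + w (if j + 1 = K+1 then 0 else j + 1))
        ≤ ∑ _j ∈ Finset.range (K+1), b := Finset.sum_le_sum hle
      _ = (K+1) * b := by rw [Finset.sum_const, Finset.card_range, smul_eq_mul]
  rw [Finset.sum_add_distrib] at h2
  have h3 : ∑ j ∈ Finset.range (K+1), w (if j + 1 = K+1 then 0 else j + 1)
      = ∑ j ∈ Finset.range (K+1), w j := by
    rw [Finset.sum_range_succ, if_pos rfl, Finset.sum_range_succ' w K]
    congr 1
    apply Finset.sum_congr rfl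
    intro j hj
    rw [if_neg (by have := Finset.mem_range.mp hj; omega)]
  omega

lemma duplicate {m n : ℕ} (hn : 2 ≤ n) (s : Finset (Fin m × Fin n))
    (hs : IndepOn (toroidalKingsGraph m n) s) :
    ∃ t : Finset (Fin m × Fin (n+2)), IndepOn (toroidalKingsGraph m (n+2)) t ∧
      t.card = s.card + (s.filter (fun v => v.2.val = 0)).card
        + (s.filter (fun v => v.2.val = n - 1)).card := by
  classical
  set ι : Fin m × Fin n → Fin m × Fin (n+2) :=
    fun v => (v.1, ⟨v.2.val, by have := v.2.isLt; omega⟩) with hι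
  set e0 : Fin m × Fin n → Fin m × Fin (n+2) := fun v => (v.1, ⟨n, by omega⟩) with he0
  set e1 : Fin m × Fin n → Fin m × Fin (n+2) := fun v => (v.1, ⟨n+1, by omega⟩) with he1
  set A := s.image ι with hA
  set B := (s.filter (fun v => v.2.val = 0)).image e0 with hB
  set C := (s.filter (fun v => v.2.val = n-1)).image e1 with hC
  have hmem : ∀ x ∈ A ∪ B ∪ C, ∃ u ∈ s, x.1 = u.1 ∧
      ((x.2.val = u.2.val ∧ u.2.val < n) ∨ (x.2.val = n ∧ u.2.val = 0) ∨
        (x.2.val = n+1 ∧ u.2.val = n-1)) := by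
    intro x hx
    rcases Finset.mem_union.mp hx with hx' | hx'
    · rcases Finset.mem_union.mp hx' with h | h
      · obtain ⟨u, hu, rfl⟩ := Finset.mem_image.mp h
        exact ⟨u, hu, rfl, Or.inl ⟨rfl, u.2.isLt⟩⟩
      · obtain ⟨u, hu, rfl⟩ := Finset.mem_image.mp h
        have hmf := Finset.mem_filter.mp hu
        exact ⟨u, hmf.1, rfl, Or.inr (Or.inl ⟨rfl, hmf.2⟩)⟩
    · obtain ⟨u, hu, rfl⟩ := Finset.mem_image.mp hx'
      have hmf := Finset.mem_filter.mp hu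
      exact ⟨u, hmf.1, rfl, Or.inr (Or.inr ⟨rfl, hmf.2⟩)⟩
  refine ⟨A ∪ B ∪ C, ?_, ?_⟩
  · intro x hx y hy hne hadj
    rw [tkg_adj] at hadj
    obtain ⟨-, hrow, hcol⟩ := hadj
    obtain ⟨u, hu, hxu1, hxu2⟩ := hmem x hx
    obtain ⟨v, hv, hyv1, hyv2⟩ := hmem y hy
    have hx2 := x.2.isLt; have hy2 := y.2.isLt
    have hu2 := u.2.isLt; have hv2 := v.2.isLt
    have hcol' := (near_iff (show 2 ≤ n + 2 by omega) hx2 hy2).mp hcol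
    by_cases huv : u = v
    · subst huv
      have hxy2 : x.2.val = y.2.val := by omega
      exact hne (Prod.ext (hxu1.trans hyv1.symm) (Fin.ext hxy2))
    · have holdcol : u.2.val = v.2.val ∨ u.2.val + 1 = v.2.val ∨ v.2.val + 1 = u.2.val ∨
          (u.2.val = 0 ∧ v.2.val + 1 = n) ∨ (v.2.val = 0 ∧ u.2.val + 1 = n) := by omega
      refine hs u hu v hv huv ((tkg_adj u v).mpr ⟨huv, ?_, (near_iff hn hu2 hv2).mpr holdcol⟩)
      rw [← hxu1, ← hyv1]
      exact hrow
  · have hA2 : ∀ z ∈ A, z.2.val < n := by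
      intro z hz; obtain ⟨u, _, rfl⟩ := Finset.mem_image.mp hz; exact u.2.isLt
    have hB2 : ∀ z ∈ B, z.2.val = n := by
      intro z hz; obtain ⟨u, _, rfl⟩ := Finset.mem_image.mp hz; rfl
    have hC2 : ∀ z ∈ C, z.2.val = n + 1 := by
      intro z hz; obtain ⟨u, _, rfl⟩ := Finset.mem_image.mp hz; rfl
    have hABC : Disjoint (A ∪ B) C := by
      rw [Finset.disjoint_left]
      intro z hz hz'
      have h1 := hC2 z hz'
      rcases Finset.mem_union.mp hz with h | h
      · have := hA2 z h; omega
      · have := hB2 z h; omega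
    have hAB : Disjoint A B := by
      rw [Finset.disjoint_left]
      intro z hz hz'
      have := hA2 z hz; have := hB2 z hz'; omega
    rw [Finset.card_union_of_disjoint hABC, Finset.card_union_of_disjoint hAB]
    have hcA : A.card = s.card := by
      apply Finset.card_image_of_injective
      intro u v huv
      simp only [hι, Prod.ext_iff, Fin.ext_iff] at huv
      exact Prod.ext (Fin.ext huv.1) (Fin.ext huv.2)
    have hcB : B.card = (s.filter (fun v => v.2.val = 0)).card := by
      apply Finset.card_image_of_injOn
      intro u hu v hv huv
      simp only [he0, Prod.ext_iff, Fin.ext_iff] at huv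
      have h1 := (Finset.mem_filter.mp hu).2
      have h2 := (Finset.mem_filter.mp hv).2
      exact Prod.ext (Fin.ext huv.1) (Fin.ext (by omega))
    have hcC : C.card = (s.filter (fun v => v.2.val = n-1)).card := by
      apply Finset.card_image_of_injOn
      intro u hu v hv huv
      simp only [he1, Prod.ext_iff, Fin.ext_iff] at huv
      have h1 := (Finset.mem_filter.mp hu).2
      have h2 := (Finset.mem_filter.mp hv).2
      exact Prod.ext (Fin.ext huv.1) (Fin.ext (by omega))
    omega

lemma heavy_rotate {m n : ℕ} (hn : 2 ≤ n) (s : Finset (Fin m × Fin n))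
    (hs : IndepOn (toroidalKingsGraph m n) s) (b : ℕ) (hb : n * b < 2 * s.card) :
    ∃ t : Finset (Fin m × Fin n), IndepOn (toroidalKingsGraph m n) t ∧ t.card = s.card ∧
      b < (t.filter (fun v => v.2.val = 0)).card
        + (t.filter (fun v => v.2.val = n - 1)).card := by
  obtain ⟨j, hj, hheavy⟩ := exists_heavy hn s b hb
  obtain ⟨t, h1, h2, h3, h4⟩ := rotate_exists hn s hs j hj
  exact ⟨t, h1, h2, by omega⟩

lemma lowerBound {m : ℕ} (hmo : ¬ 2 ∣ m) (hm3 : 3 ≤ m) :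
    ∀ ν : ℕ, ¬ 2 ∣ ν → m ≤ ν →
      ∃ s : Finset (Fin m × Fin ν), IndepOn (toroidalKingsGraph m ν) s ∧
        ν * (m / 2) ≤ 2 * s.card + 1 := by
  intro ν
  induction ν using Nat.strong_induction_on with
  | _ ν IH =>
    intro hνo hmν
    by_cases hbase : ν < m + 2
    · -- base case : ν = m
      have hνm : ν = m := by omega
      subst hνm
      by_cases h3 : ν = 3
      · subst h3
        refine ⟨{(⟨0, by omega⟩, ⟨0, by omega⟩)}, ?_, by simp⟩
        intro a ha b hb hab
        rw [Finset.mem_singleton] at ha hb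
        exact absurd (ha.trans hb.symm) hab
      · by_cases hev : 2 ∣ (ν / 2)
        · -- a even : direct construction
          obtain ⟨s, hsI, hsc⟩ := constructionF (m := ν) (a := ν / 2) (n := ν)
            (by omega) (by omega) hev hνo le_rfl
          refine ⟨s, hsI, ?_⟩
          obtain ⟨t, ht⟩ := hev
          rw [hsc]
          have e2 : ν / 2 / 2 = t := by omega
          have e3 : ν * (ν / 2) = ν * (2 * t) := by rw [ht]
          have e4 : ν * (2 * t) = 2 * (t * ν) := by ring
          rw [e2, e3, e4]
          omega
        · -- a odd : build from (ν-2) × ν construction by duplicating a row pair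
          obtain ⟨μ, rfl⟩ : ∃ μ, ν = μ + 2 := ⟨ν - 2, by omega⟩
          have hμo : ¬ 2 ∣ μ := by omega
          have hμ5 : 5 ≤ μ := by omega
          obtain ⟨t, h2t⟩ : ∃ t, μ / 2 = 2 * t := by
            have : 2 ∣ (μ / 2) := by omega
            exact this
          have hμval : μ = 4 * t + 1 := by omega
          obtain ⟨s₀, hs₀I, hs₀c⟩ := constructionF (m := μ) (a := μ / 2) (n := μ + 2)
            (by omega) (by omega) ⟨t, h2t⟩ hνo (by omega)
          obtain ⟨hs₁I, hs₁c⟩ := swap_indep s₀ hs₀I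
          set s₁ := s₀.image Prod.swap with hs₁
          have hs₁card : s₁.card = t * (μ + 2) := by
            rw [hs₁c, hs₀c]
            have : μ / 2 / 2 = t := by omega
            rw [this]
          have hb : μ * (μ / 2) < 2 * s₁.card := by
            rw [hs₁card, h2t]
            have e4 : μ * (2 * t) = 2 * (t * μ) := by ring
            have e5 : t * (μ + 2) = t * μ + 2 * t := by ring
            omega
          obtain ⟨t₁, ht₁I, ht₁c, ht₁h⟩ := heavy_rotate (by omega) s₁ hs₁I (μ / 2) hb
          obtain ⟨t₂, ht₂I, ht₂c⟩ := duplicate (by omega) t₁ ht₁I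
          refine ⟨t₂, ht₂I, ?_⟩
          have e6 : (μ + 2) / 2 = 2 * t + 1 := by omega
          have e7 : (μ + 2) * (2 * t + 1) = 2 * (t * (μ + 2)) + (μ + 2) := by ring
          rw [e6, e7]
          omega
    · -- inductive step : duplicate a heavy column pair
      obtain ⟨ν', rfl⟩ : ∃ ν', ν = ν' + 2 := ⟨ν - 2, by omega⟩
      obtain ⟨s, hsI, hsge⟩ := IH ν' (by omega) (by omega) (by omega)
      have hν'2 : 2 ≤ ν' := by omega
      obtain ⟨g, hg⟩ : ∃ g, m / 2 = g + 1 := ⟨m / 2 - 1, by omega⟩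
      have hb : ν' * g < 2 * s.card := by
        have e1 : ν' * (g + 1) = ν' * g + ν' := by ring
        rw [hg, e1] at hsge
        omega
      obtain ⟨t₁, ht₁I, ht₁c, ht₁h⟩ := heavy_rotate hν'2 s hsI g hb
      obtain ⟨t₂, ht₂I, ht₂c⟩ := duplicate hν'2 t₁ ht₁I
      refine ⟨t₂, ht₂I, ?_⟩
      have e2 : (ν' + 2) * (m / 2) = ν' * (m / 2) + 2 * (m / 2) := by ring
      rw [e2, hg]
      have e3 : ν' * (g + 1) = ν' * g + ν' := by ring
      rw [hg, e3] at hsge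
      omega



/-- the independence number of the m×n toroidal king's graph. -/
theorem toroidal_kings_indep (m n : ℕ) (hm : 2 ≤ m) (hmn : m ≤ n) :
    ((Even m ∨ Even n) → indepNumber (toroidalKingsGraph m n) = (m / 2) * (n / 2)) ∧
    (Odd m → Odd n → indepNumber (toroidalKingsGraph m n) = n * (m / 2) / 2) := by
  have hn2 : 2 ≤ n := le_trans hm hmn
  constructor
  · intro hpar
    unfold indepNumber
    apply indepNumber_eq_of
    · exact constructionE hm hn2
    · intro s hsI
      rcases hpar with hme | hne
      · obtain ⟨hind, hcard⟩ := swap_indep s hsI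
        have hub := card_le_ub hn2 hm (s.image Prod.swap) hind
        rw [hcard] at hub
        obtain ⟨x, rfl⟩ := hme
        have e1 : (x + x) * (n / 2) = (x * (n / 2)) * 2 := by ring
        rw [e1, Nat.mul_div_cancel _ (by norm_num)] at hub
        have e2 : (x + x) / 2 = x := by omega
        rw [e2]
        exact hub
      · have hub := card_le_ub hm hn2 s hsI
        obtain ⟨x, rfl⟩ := hne
        have e1 : (x + x) * (m / 2) = ((m / 2) * x) * 2 := by ring
        rw [e1, Nat.mul_div_cancel _ (by norm_num)] at hub
        have e2 : (x + x) / 2 = x := by omega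
        rw [e2]
        exact hub
  · intro hmo hno
    have hmo' : ¬ 2 ∣ m := by have := Nat.odd_iff.mp hmo; omega
    have hno' : ¬ 2 ∣ n := by have := Nat.odd_iff.mp hno; omega
    unfold indepNumber
    apply indepNumber_eq_of
    · obtain ⟨s, hsI, hsge⟩ := lowerBound hmo' (by omega) n hno' hmn
      have hub := card_le_ub hm hn2 s hsI
      have hk : n * (m / 2) / 2 ≤ s.card := by omega
      obtain ⟨t, hts, htc⟩ := Finset.exists_subset_card_eq hk
      exact ⟨t, hsI.subset hts, htc⟩
    · intro s hsI
      exact card_le_ub hm hn2 s hsI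


end ChessGonality
end

section
/- For 3 ≤ m ≤ n, the gonality of the m×n bishop's graph satisfies gon(B_{m×n}) ≤ m²(m²−1)/6. -/
open Finset SimpleGraph
open scoped Classical

namespace ChessGonality

variable {V : Type*} [Fintype V]

section BishopsUpper

variable {m n : ℕ}

private def Jc (v : Fin m × Fin n) : ℤ := v.2.val
private def Ic (v : Fin m × Fin n) : ℤ := v.1.val

private lemma Jc_nonneg (v : Fin m × Fin n) : 0 ≤ Jc v := Int.natCast_nonneg _

private lemma bishops_adj_iff {u w : Fin m × Fin n} :
    (bishopsGraph m n).Adj u w ↔ u ≠ w ∧ |Ic u - Ic w| = |Jc u - Jc w| := by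
  show (SimpleGraph.fromRel _).Adj u w ↔ _
  rw [SimpleGraph.fromRel_adj]
  constructor
  · rintro ⟨hne, h | h⟩
    · exact ⟨hne, h⟩
    · refine ⟨hne, ?_⟩
      rw [abs_sub_comm (Ic u) (Ic w), abs_sub_comm (Jc u) (Jc w)]
      exact h
  · rintro ⟨hne, h⟩
    exact ⟨hne, Or.inl h⟩

private noncomputable def bigD (m n : ℕ) (v : Fin m × Fin n) : ℤ :=
  ∑ w : Fin m × Fin n,
    if (bishopsGraph m n).Adj v w ∧ 2 * Jc v < Jc w then Jc w - Jc v else 0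

private noncomputable def netD (m n : ℕ) (v : Fin m × Fin n) : ℤ :=
  ∑ w : Fin m × Fin n, if (bishopsGraph m n).Adj v w then Jc w - Jc v else 0

private lemma bigD_term_nonneg (v w : Fin m × Fin n) :
    0 ≤ (if (bishopsGraph m n).Adj v w ∧ 2 * Jc v < Jc w then Jc w - Jc v else 0) := by
  split_ifs with h
  · have h1 := h.2
    have h2 := Jc_nonneg v
    linarith
  · exact le_refl 0

private lemma bigD_nonneg (v : Fin m × Fin n) : 0 ≤ bigD m n v :=
  Finset.sum_nonneg fun w _ => bigD_term_nonneg v w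

private lemma net_le_bigD (hn : 0 < n) (v : Fin m × Fin n) :
    netD m n v ≤ bigD m n v := by
  classical
  have hsplit : netD m n v = bigD m n v + ∑ w : Fin m × Fin n,
      (if (bishopsGraph m n).Adj v w ∧ Jc w ≤ 2 * Jc v then Jc w - Jc v else 0) := by
    rw [netD, bigD, ← Finset.sum_add_distrib]
    refine Finset.sum_congr rfl fun w _ => ?_
    by_cases h1 : (bishopsGraph m n).Adj v w
    · rcases le_or_gt (Jc w) (2 * Jc v) with h2 | h2
      · rw [if_pos h1, if_neg (by push_neg; intro _; linarith), if_pos ⟨h1, h2⟩]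
        ring
      · rw [if_pos h1, if_pos ⟨h1, h2⟩, if_neg (by push_neg; intro _; linarith)]
        ring
    · rw [if_neg h1, if_neg (by tauto), if_neg (by tauto)]
      ring
  rw [hsplit]
  suffices h : (∑ w : Fin m × Fin n,
      if (bishopsGraph m n).Adj v w ∧ Jc w ≤ 2 * Jc v then Jc w - Jc v else 0) ≤ 0 by
    linarith
  rw [← Finset.sum_filter]
  set P : Finset (Fin m × Fin n) :=
    Finset.univ.filter (fun w => (bishopsGraph m n).Adj v w ∧ Jc w ≤ 2 * Jc v) with hP
  rw [← Finset.sum_filter_add_sum_filter_not P (fun w => Jc v < Jc w)]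
  set Pp := P.filter (fun w => Jc v < Jc w) with hPp
  set Pm := P.filter (fun w => ¬ Jc v < Jc w) with hPm
  have hmemPp : ∀ w ∈ Pp, (bishopsGraph m n).Adj v w ∧
      v.2.val < w.2.val ∧ w.2.val ≤ 2 * v.2.val := by
    intro w hw
    rw [hPp, Finset.mem_filter, hP, Finset.mem_filter] at hw
    obtain ⟨⟨-, hadj, hle⟩, hlt⟩ := hw
    refine ⟨hadj, ?_, ?_⟩
    · have : (v.2.val : ℤ) < (w.2.val : ℤ) := hlt
      exact_mod_cast this
    · have : (w.2.val : ℤ) ≤ 2 * (v.2.val : ℤ) := hle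
      exact_mod_cast this
  set φ : Fin m × Fin n → Fin m × Fin n :=
    fun w => (w.1, ⟨(2 * v.2.val - w.2.val) % n, Nat.mod_lt _ hn⟩) with hφ
  have hval : ∀ w ∈ Pp, (φ w).2.val = 2 * v.2.val - w.2.val := by
    intro w hw
    obtain ⟨-, h1, h2⟩ := hmemPp w hw
    have hv2 := v.2.isLt
    simp only [hφ]
    exact Nat.mod_eq_of_lt (by omega)
  have hJφ : ∀ w ∈ Pp, Jc (φ w) = 2 * Jc v - Jc w := by
    intro w hw
    obtain ⟨-, h1, h2⟩ := hmemPp w hw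
    have := hval w hw
    simp only [Jc] at *
    omega
  have hφmem : ∀ w ∈ Pp, φ w ∈ Pm := by
    intro w hw
    obtain ⟨hadj, h1, h2⟩ := hmemPp w hw
    have hJ := hJφ w hw
    have hlt' : Jc (φ w) < Jc v := by
      have : (v.2.val : ℤ) < (w.2.val : ℤ) := by exact_mod_cast h1
      simp only [Jc] at *
      omega
    have hadj' : (bishopsGraph m n).Adj v (φ w) := by
      rw [bishops_adj_iff] at hadj ⊢
      obtain ⟨hne, habs⟩ := hadj
      constructor
      · intro heq
        have := congrArg Jc heq
        omega
      · have hIc : Ic (φ w) = Ic w := rfl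
        rw [hIc, hJ, habs]
        have : Jc v - (2 * Jc v - Jc w) = -(Jc v - Jc w) := by ring
        rw [this, abs_neg]
    rw [hPm, Finset.mem_filter, hP, Finset.mem_filter]
    have h0 := Jc_nonneg v
    exact ⟨⟨Finset.mem_univ _, hadj', by omega⟩, by omega⟩
  have hinj : ∀ w ∈ Pp, ∀ w' ∈ Pp, φ w = φ w' → w = w' := by
    intro w hw w' hw' heq
    obtain ⟨-, h1, h2⟩ := hmemPp w hw
    obtain ⟨-, h1', h2'⟩ := hmemPp w' hw'
    have e1 : w.1 = w'.1 := congrArg (fun p => p.1) heq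
    have e2 : (φ w).2.val = (φ w').2.val := congrArg (fun p => p.2.val) heq
    rw [hval w hw, hval w' hw'] at e2
    have e3 : w.2.val = w'.2.val := by omega
    exact Prod.ext e1 (Fin.ext e3)
  have hSplus : ∑ w ∈ Pp, (Jc w - Jc v) ≤ ∑ w ∈ Pm, (Jc v - Jc w) := by
    calc ∑ w ∈ Pp, (Jc w - Jc v) = ∑ w ∈ Pp, (Jc v - Jc (φ w)) := by
          refine Finset.sum_congr rfl fun w hw => ?_
          rw [hJφ w hw]; ring
      _ = ∑ u ∈ Pp.image φ, (Jc v - Jc u) := by rw [Finset.sum_image hinj]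
      _ ≤ ∑ w ∈ Pm, (Jc v - Jc w) := by
          refine Finset.sum_le_sum_of_subset_of_nonneg ?_ ?_
          · intro u hu
            obtain ⟨w, hw, rfl⟩ := Finset.mem_image.mp hu
            exact hφmem w hw
          · intro u hu _
            rw [hPm, Finset.mem_filter] at hu
            have := hu.2
            omega
  have hSminus : ∑ w ∈ Pm, (Jc w - Jc v) ≤ 0 := by
    refine Finset.sum_nonpos fun w hw => ?_
    rw [hPm, Finset.mem_filter] at hw
    have := hw.2
    omega
  have hneg : ∑ w ∈ Pm, (Jc v - Jc w) = - ∑ w ∈ Pm, (Jc w - Jc v) := by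
    rw [← Finset.sum_neg_distrib]
    exact Finset.sum_congr rfl fun w _ => by ring
  linarith

private lemma exists_step (hm : 3 ≤ m) (v : Fin m × Fin n) (c' : ℕ) (hc' : c' < n)
    (hdiff : (c' : ℤ) = Jc v + 1 ∨ (c' : ℤ) = Jc v - 1) :
    ∃ w : Fin m × Fin n, (bishopsGraph m n).Adj v w ∧ Jc w = (c' : ℤ) := by
  have h1m : 1 < m := by omega
  by_cases h0 : v.1.val = 0
  · refine ⟨(⟨1, h1m⟩, ⟨c', hc'⟩), ?_, rfl⟩
    rw [bishops_adj_iff]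
    constructor
    · intro heq
      have := congrArg (fun p => p.1.val) heq
      simp only [h0] at this
      exact absurd this.symm (by norm_num)
    · have e1 : Ic v - Ic ((⟨1, h1m⟩ : Fin m), (⟨c', hc'⟩ : Fin n)) = -1 := by
        simp only [Ic, h0]
        norm_num
      have e2 : Jc v - Jc ((⟨1, h1m⟩ : Fin m), (⟨c', hc'⟩ : Fin n)) = -1 ∨
          Jc v - Jc ((⟨1, h1m⟩ : Fin m), (⟨c', hc'⟩ : Fin n)) = 1 := by
        simp only [Jc] at hdiff ⊢
        omega
      rw [e1]
      rcases e2 with e2 | e2 <;> rw [e2] <;> norm_num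
  · refine ⟨(⟨v.1.val - 1, by omega⟩, ⟨c', hc'⟩), ?_, rfl⟩
    rw [bishops_adj_iff]
    constructor
    · intro heq
      have := congrArg (fun p => p.1.val) heq
      simp only at this
      omega
    · have e1 : Ic v - Ic ((⟨v.1.val - 1, by omega⟩ : Fin m), (⟨c', hc'⟩ : Fin n)) = 1 := by
        simp only [Ic]
        omega
      have e2 : Jc v - Jc ((⟨v.1.val - 1, by omega⟩ : Fin m), (⟨c', hc'⟩ : Fin n)) = -1 ∨
          Jc v - Jc ((⟨v.1.val - 1, by omega⟩ : Fin m), (⟨c', hc'⟩ : Fin n)) = 1 := by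
        simp only [Jc] at hdiff ⊢
        omega
      rw [e1]
      rcases e2 with e2 | e2 <;> rw [e2] <;> norm_num

private lemma bigD_effective : Effective (bigD m n) := fun v => bigD_nonneg v

private lemma bigD_posrank (hm : 3 ≤ m) (hmn : m ≤ n) :
    PositiveRank (bishopsGraph m n) (bigD m n) := by
  have hn : 0 < n := by omega
  intro v0
  set s : ℤ := Jc v0 with hs
  set f : Fin m × Fin n → ℤ := fun v => max (s - Jc v) 0 with hf
  refine ⟨fun v => bigD m n v - lap (bishopsGraph m n) f v,
    ⟨f, fun v => by ring⟩, ?_, ?_⟩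
  · intro v
    have hlap : lap (bishopsGraph m n) f v ≤ bigD m n v := by
      rcases le_or_gt s (Jc v) with h | h
      · have h0 : (0:ℤ) ≤ bigD m n v := bigD_nonneg v
        have hle : lap (bishopsGraph m n) f v ≤ 0 := by
          rw [lap]
          refine Finset.sum_nonpos fun w _ => ?_
          by_cases hw : (bishopsGraph m n).Adj v w
          · rw [if_pos hw]
            have h1 : f v = 0 := max_eq_right (by omega)
            have h2 : (0:ℤ) ≤ f w := le_max_right _ _
            omega
          · rw [if_neg hw]
        linarith
      · have h1 : lap (bishopsGraph m n) f v ≤ netD m n v := by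
          rw [lap, netD]
          refine Finset.sum_le_sum fun w _ => ?_
          by_cases hw : (bishopsGraph m n).Adj v w
          · rw [if_pos hw, if_pos hw]
            have h2 : f v = s - Jc v := max_eq_left (by omega)
            have h3 : s - Jc w ≤ f w := le_max_left _ _
            omega
          · rw [if_neg hw, if_neg hw]
        exact h1.trans (net_le_bigD hn v)
    simp only
    linarith
  · simp only
    have hfv0 : f v0 = 0 := by
      simp only [hf]
      omega
    have hlap0 : lap (bishopsGraph m n) f v0
        = - ∑ w : Fin m × Fin n,
            (if (bishopsGraph m n).Adj v0 w then max (s - Jc w) 0 else 0) := by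
      rw [lap, ← Finset.sum_neg_distrib]
      refine Finset.sum_congr rfl fun w _ => ?_
      by_cases hw : (bishopsGraph m n).Adj v0 w
      · rw [if_pos hw, if_pos hw, hfv0]
        simp only [hf]
        ring
      · rw [if_neg hw, if_neg hw]
        ring
    rw [hlap0]
    have hsum0 : (0:ℤ) ≤ ∑ w : Fin m × Fin n,
        (if (bishopsGraph m n).Adj v0 w then max (s - Jc w) 0 else 0) := by
      refine Finset.sum_nonneg fun w _ => ?_
      by_cases hw : (bishopsGraph m n).Adj v0 w
      · rw [if_pos hw]; exact le_max_right _ _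
      · rw [if_neg hw]
    rcases Nat.eq_zero_or_pos v0.2.val with hc0 | hc0
    · have hs0 : s = 0 := by simp only [hs, Jc, hc0]; norm_num
      obtain ⟨w0, hadj, hJw0⟩ := exists_step hm v0 1 (by omega)
        (by left; rw [← hs, hs0]; norm_num)
      have hterm : (1:ℤ) ≤ bigD m n v0 := by
        have hcond : (bishopsGraph m n).Adj v0 w0 ∧ 2 * Jc v0 < Jc w0 :=
          ⟨hadj, by rw [hJw0, ← hs, hs0]; norm_num⟩
        have heq1 : (if (bishopsGraph m n).Adj v0 w0 ∧ 2 * Jc v0 < Jc w0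
            then Jc w0 - Jc v0 else 0) = 1 := by
          rw [if_pos hcond, hJw0, ← hs, hs0]
          norm_num
        rw [bigD, ← heq1]
        exact Finset.single_le_sum (f := fun w =>
          (if (bishopsGraph m n).Adj v0 w ∧ 2 * Jc v0 < Jc w then Jc w - Jc v0 else 0))
          (fun w _ => bigD_term_nonneg v0 w) (Finset.mem_univ w0)
      linarith
    · obtain ⟨w0, hadj, hJw0⟩ := exists_step hm v0 (v0.2.val - 1)
        (by omega) (by right; simp only [hs, Jc]; omega)
      have hterm : (1:ℤ) ≤ ∑ w : Fin m × Fin n,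
          (if (bishopsGraph m n).Adj v0 w then max (s - Jc w) 0 else 0) := by
        have heq1 : (if (bishopsGraph m n).Adj v0 w0
            then max (s - Jc w0) 0 else 0) = 1 := by
          rw [if_pos hadj, hJw0]
          have : s - ((v0.2.val - 1 : ℕ) : ℤ) = 1 := by
            simp only [hs, Jc]
            omega
          rw [this]
          norm_num
        rw [← heq1]
        refine Finset.single_le_sum (f := fun w =>
          (if (bishopsGraph m n).Adj v0 w then max (s - Jc w) 0 else 0))
          (fun w _ => ?_) (Finset.mem_univ w0)
        by_cases hw : (bishopsGraph m n).Adj v0 w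
        · rw [if_pos hw]; exact le_max_right _ _
        · rw [if_neg hw]
      have h0 : (0:ℤ) ≤ bigD m n v0 := bigD_nonneg v0
      linarith

private lemma sum_indicator_le {X d : ℤ} (hd : 0 ≤ d) :
    ∑ c' : Fin n, (if ((c'.val : ℤ) = X) then d else 0) ≤ d := by
  classical
  rw [Finset.sum_ite, Finset.sum_const, Finset.sum_const_zero, add_zero]
  have hcard : (Finset.univ.filter (fun c' : Fin n => ((c'.val : ℤ) = X))).card ≤ 1 := by
    refine Finset.card_le_one.mpr fun a ha b hb => ?_
    rw [Finset.mem_filter] at ha hb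
    have : a.val = b.val := by omega
    exact Fin.ext this
  calc (Finset.univ.filter (fun c' : Fin n => ((c'.val : ℤ) = X))).card • d
      = ((Finset.univ.filter (fun c' : Fin n => ((c'.val : ℤ) = X))).card : ℤ) * d := by
        rw [nsmul_eq_mul]
    _ ≤ 1 * d := by
        refine mul_le_mul_of_nonneg_right ?_ hd
        exact_mod_cast hcard
    _ = d := one_mul d

private lemma inner_bound (i i' : Fin m) :
    (∑ c : Fin n, ∑ c' : Fin n,
      (if (bishopsGraph m n).Adj (i, c) (i', c') ∧ 2 * Jc (i, c) < Jc (i', c')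
        then Jc (i', c') - Jc (i, c) else 0))
      ≤ ((i.val : ℤ) - (i'.val : ℤ))^2 := by
  classical
  set d : ℤ := |(i.val : ℤ) - (i'.val : ℤ)| with hd
  have hd0 : 0 ≤ d := abs_nonneg _
  have step1 : ∀ c c' : Fin n,
      (if (bishopsGraph m n).Adj (i, c) (i', c') ∧ 2 * Jc (i, c) < Jc (i', c')
        then Jc (i', c') - Jc (i, c) else 0)
      ≤ (if (((c'.val : ℤ) = (c.val : ℤ) + d) ∧ ((c.val : ℤ) < d)) then d else 0) := by
    intro c c'
    by_cases h1 : (bishopsGraph m n).Adj (i, c) (i', c') ∧ 2 * Jc (i, c) < Jc (i', c')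
    · have hadj := h1.1
      have hlt := h1.2
      rw [bishops_adj_iff] at hadj
      have habs := hadj.2
      have hJc1 : Jc (i, c) = (c.val : ℤ) := rfl
      have hJc2 : Jc (i', c') = (c'.val : ℤ) := rfl
      have habs' : |(i.val : ℤ) - (i'.val : ℤ)| = |(c.val : ℤ) - (c'.val : ℤ)| := habs
      have hlt' : 2 * (c.val : ℤ) < (c'.val : ℤ) := by rw [hJc1, hJc2] at hlt; exact hlt
      have hc0 : (0:ℤ) ≤ (c.val : ℤ) := Int.natCast_nonneg _
      have hcc' : (c.val : ℤ) < (c'.val : ℤ) := by omega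
      have habs2 : |(c.val : ℤ) - (c'.val : ℤ)| = (c'.val : ℤ) - (c.val : ℤ) := by
        rw [abs_sub_comm]
        exact abs_of_nonneg (by omega)
      have hdd : d = (c'.val : ℤ) - (c.val : ℤ) := by rw [hd, habs', habs2]
      rw [if_pos h1, if_pos (⟨by omega, by omega⟩ : _ ∧ _)]
      rw [hJc1, hJc2]
      omega
    · rw [if_neg h1]
      split_ifs with h2
      · exact hd0
      · exact le_refl 0
  calc (∑ c : Fin n, ∑ c' : Fin n,
      (if (bishopsGraph m n).Adj (i, c) (i', c') ∧ 2 * Jc (i, c) < Jc (i', c')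
        then Jc (i', c') - Jc (i, c) else 0))
      ≤ ∑ c : Fin n, ∑ c' : Fin n,
        (if (((c'.val : ℤ) = (c.val : ℤ) + d) ∧ ((c.val : ℤ) < d)) then d else 0) :=
        Finset.sum_le_sum fun c _ => Finset.sum_le_sum fun c' _ => step1 c c'
    _ ≤ ∑ c : Fin n, (if ((c.val : ℤ) < d) then d else 0) := by
        refine Finset.sum_le_sum fun c _ => ?_
        by_cases hc : ((c.val : ℤ) < d)
        · rw [if_pos hc]
          calc ∑ c' : Fin n, (if (((c'.val : ℤ) = (c.val : ℤ) + d) ∧ ((c.val : ℤ) < d))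
                then d else 0)
              = ∑ c' : Fin n, (if ((c'.val : ℤ) = (c.val : ℤ) + d) then d else 0) := by
                refine Finset.sum_congr rfl fun c' _ => ?_
                simp only [hc, and_true]
            _ ≤ d := sum_indicator_le hd0
        · rw [if_neg hc]
          refine le_of_eq (Finset.sum_eq_zero fun c' _ => ?_)
          rw [if_neg (by tauto)]
    _ ≤ d * d := by
        rw [Finset.sum_ite, Finset.sum_const, Finset.sum_const_zero, add_zero,
          nsmul_eq_mul]
        refine mul_le_mul_of_nonneg_right ?_ hd0
        have hcard : (Finset.univ.filter (fun c : Fin n => ((c.val : ℤ) < d))).card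
            ≤ d.toNat := by
          have := Finset.card_le_card_of_injOn (f := fun c : Fin n => c.val)
            (s := Finset.univ.filter (fun c : Fin n => ((c.val : ℤ) < d)))
            (t := Finset.range d.toNat)
            (fun c hc => by
              rw [Finset.mem_coe, Finset.mem_filter] at hc
              have h2 := hc.2
              simp only [Finset.mem_coe, Finset.mem_range]
              omega)
            (fun a ha b hb hab => Fin.ext hab)
          simpa using this
        calc ((Finset.univ.filter (fun c : Fin n => ((c.val : ℤ) < d))).card : ℤ)
            ≤ (d.toNat : ℤ) := by exact_mod_cast hcard
          _ = d := Int.toNat_of_nonneg hd0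
    _ = ((i.val : ℤ) - (i'.val : ℤ))^2 := by
        rw [hd, abs_mul_abs_self]
        ring

private lemma deg_le_Q :
    (∑ v : Fin m × Fin n, bigD m n v)
      ≤ ∑ i : Fin m, ∑ i' : Fin m, ((i.val : ℤ) - (i'.val : ℤ))^2 := by
  classical
  rw [Fintype.sum_prod_type]
  refine Finset.sum_le_sum fun i _ => ?_
  calc ∑ c : Fin n, bigD m n (i, c)
      = ∑ c : Fin n, ∑ i' : Fin m, ∑ c' : Fin n,
          (if (bishopsGraph m n).Adj (i, c) (i', c') ∧ 2 * Jc (i, c) < Jc (i', c')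
            then Jc (i', c') - Jc (i, c) else 0) := by
        refine Finset.sum_congr rfl fun c _ => ?_
        rw [bigD, Fintype.sum_prod_type]
    _ = ∑ i' : Fin m, ∑ c : Fin n, ∑ c' : Fin n,
          (if (bishopsGraph m n).Adj (i, c) (i', c') ∧ 2 * Jc (i, c) < Jc (i', c')
            then Jc (i', c') - Jc (i, c) else 0) := Finset.sum_comm
    _ ≤ ∑ i' : Fin m, ((i.val : ℤ) - (i'.val : ℤ))^2 :=
        Finset.sum_le_sum fun i' _ => inner_bound i i'

private lemma sum_range_cast (N : ℕ) :
    2 * ∑ i ∈ Finset.range N, (i : ℤ) = N * (N - 1) := by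
  induction N with
  | zero => simp
  | succ k ih =>
    rw [Finset.sum_range_succ]
    push_cast
    push_cast at ih
    linear_combination ih

private lemma sum_range_sq_cast (N : ℕ) :
    6 * ∑ i ∈ Finset.range N, (i : ℤ)^2 = N * (N - 1) * (2 * N - 1) := by
  induction N with
  | zero => simp
  | succ k ih =>
    rw [Finset.sum_range_succ]
    push_cast
    push_cast at ih
    linear_combination ih

private lemma Q_eval (m : ℕ) :
    6 * ∑ i : Fin m, ∑ i' : Fin m, ((i.val : ℤ) - (i'.val : ℤ))^2
      = (m : ℤ)^4 - (m : ℤ)^2 := by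
  classical
  set A : ℤ := ∑ i : Fin m, (i.val : ℤ) with hA0
  set B : ℤ := ∑ i : Fin m, (i.val : ℤ)^2 with hB0
  have hA : 2 * A = (m : ℤ) * ((m : ℤ) - 1) := by
    rw [hA0, Fin.sum_univ_eq_sum_range (fun k => (k : ℤ))]
    exact sum_range_cast m
  have hB : 6 * B = (m : ℤ) * ((m : ℤ) - 1) * (2 * (m : ℤ) - 1) := by
    rw [hB0, Fin.sum_univ_eq_sum_range (fun k => (k : ℤ)^2)]
    exact sum_range_sq_cast m
  have hexp : ∀ i : Fin m, ∑ i' : Fin m, ((i.val : ℤ) - (i'.val : ℤ))^2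
      = (m : ℤ) * (i.val : ℤ)^2 - 2 * (i.val : ℤ) * A + B := by
    intro i
    have h1 : ∀ i' : Fin m, ((i.val : ℤ) - (i'.val : ℤ))^2
        = (i.val : ℤ)^2 - 2 * (i.val : ℤ) * (i'.val : ℤ) + (i'.val : ℤ)^2 :=
      fun i' => by ring
    rw [Finset.sum_congr rfl fun i' _ => h1 i']
    rw [Finset.sum_add_distrib, Finset.sum_sub_distrib, Finset.sum_const,
      Finset.card_univ, Fintype.card_fin, ← Finset.mul_sum, ← hA0, ← hB0,
      nsmul_eq_mul]
  have key : ∑ i : Fin m, ∑ i' : Fin m, ((i.val : ℤ) - (i'.val : ℤ))^2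
      = 2 * (m : ℤ) * B - 2 * A * A := by
    rw [Finset.sum_congr rfl fun i _ => hexp i]
    rw [Finset.sum_add_distrib, Finset.sum_sub_distrib, Finset.sum_const,
      Finset.card_univ, Fintype.card_fin, ← Finset.mul_sum, ← Finset.sum_mul,
      ← Finset.mul_sum]
    rw [← hB0, ← hA0, nsmul_eq_mul]
    ring
  rw [key]
  linear_combination (2 * (m:ℤ)) * hB - (3 * (2 * A + (m:ℤ) * ((m:ℤ) - 1))) * hA

end BishopsUpper

/-- for 3 ≤ m ≤ n, gon(B_{m×n}) ≤ m²(m²−1)/6.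
(The numerator is always divisible by 6, so natural division is exact.) -/
theorem bishops_gonality_upper (m n : ℕ) (hm : 3 ≤ m) (hmn : m ≤ n) :
    gonality (bishopsGraph m n) ≤ m ^ 2 * (m ^ 2 - 1) / 6 := by
  have hn : 0 < n := by omega
  have hS0 : (0:ℤ) ≤ ∑ v : Fin m × Fin n, bigD m n v :=
    Finset.sum_nonneg fun v _ => bigD_nonneg v
  have hdeg : divisorDeg (bigD m n) = ((∑ v : Fin m × Fin n, bigD m n v).toNat : ℤ) := by
    rw [Int.toNat_of_nonneg hS0]
    rfl
  have hmem : (∑ v : Fin m × Fin n, bigD m n v).toNat ∈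
      {k : ℕ | ∃ D : (Fin m × Fin n) → ℤ, Effective D ∧
        PositiveRank (bishopsGraph m n) D ∧ divisorDeg D = (k : ℤ)} :=
    ⟨bigD m n, bigD_effective, bigD_posrank hm hmn, hdeg⟩
  have h1 : gonality (bishopsGraph m n) ≤ (∑ v : Fin m × Fin n, bigD m n v).toNat :=
    Nat.sInf_le hmem
  refine h1.trans ?_
  rw [Nat.le_div_iff_mul_le (by norm_num : 0 < 6)]
  have hQ := Q_eval m
  have hle := deg_le_Q (m := m) (n := n)
  have hZ : ((∑ v : Fin m × Fin n, bigD m n v).toNat : ℤ) * 6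
      ≤ (m:ℤ)^4 - (m:ℤ)^2 := by
    rw [Int.toNat_of_nonneg hS0]
    linarith
  have hcast : ((m ^ 2 * (m ^ 2 - 1) : ℕ) : ℤ) = (m:ℤ)^4 - (m:ℤ)^2 := by
    have h1m : 1 ≤ m ^ 2 := by nlinarith
    push_cast [h1m]
    ring
  exact_mod_cast hcast ▸ hZ


end ChessGonality
end

section
/- Let m ≥ 4 be even and let n ≥ (1/6)(m−1)m²(m+1). Then the scramble numbers of the two components of the m×n bishop's graph satisfy sn(B^w_{m×n}) = sn(B^b_{m×n}) = (1/6)(m−1)m(m+1). -/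
open Finset SimpleGraph
open scoped Classical

namespace ChessGonality

variable {V : Type*} [Fintype V]

section Arith

/-- `sumN m = ∑_{k<m} k (m-k)`. -/
def sumN (m : ℕ) : ℕ := ∑ k ∈ Finset.range m, k * (m - k)

lemma sumN_eq (m : ℕ) : 6 * sumN m = (m - 1) * m * (m + 1) := by
  induction m with
  | zero => simp [sumN]
  | succ m ih =>
    have h1 : sumN (m + 1) = sumN m + (∑ k ∈ Finset.range (m+1), k) := by
      rw [sumN, Finset.sum_range_succ]
      have h2 : ∀ k ∈ Finset.range m, k * (m + 1 - k) = k * (m - k) + k := by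
        intro k hk
        simp only [Finset.mem_range] at hk
        have : m + 1 - k = (m - k) + 1 := by omega
        rw [this, Nat.mul_add, Nat.mul_one]
      rw [Finset.sum_congr rfl h2, Finset.sum_add_distrib, Finset.sum_range_succ, sumN]
      have : m + 1 - m = 1 := by omega
      rw [this]
      omega
    have h4 : (∑ k ∈ Finset.range (m+1), k) * 2 = m * (m + 1) := by
      rw [Finset.sum_range_id_mul_two (m+1)]
      simp [Nat.mul_comm]
    have key : (m - 1) * m * (m + 1) + 3 * (m * (m + 1)) = m * (m + 1) * (m + 2) := by
      rcases Nat.eq_zero_or_pos m with rfl | hpos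
      · simp
      rcases Nat.exists_eq_add_of_le hpos with ⟨j, rfl⟩
      have : 1 + j - 1 = j := by omega
      rw [this]; ring
    calc 6 * sumN (m+1) = 6 * sumN m + 3 * ((∑ k ∈ Finset.range (m+1), k) * 2) := by
          rw [h1]; ring
      _ = (m - 1) * m * (m + 1) + 3 * (m * (m+1)) := by rw [ih, h4]
      _ = m * (m + 1) * (m + 2) := key
      _ = (m + 1 - 1) * (m + 1) * (m + 1 + 1) := by simp

lemma sumN_div (m : ℕ) : sumN m = (m - 1) * m * (m + 1) / 6 := by
  have := sumN_eq m; omega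

end Arith


section Setup

lemma bishops_adj {m n : ℕ} (u v : Fin m × Fin n) :
    (bishopsGraph m n).Adj u v ↔ u ≠ v ∧
      (u.1.val + v.2.val = v.1.val + u.2.val ∨ u.1.val + u.2.val = v.1.val + v.2.val) := by
  simp only [bishopsGraph, fromRel_adj]
  constructor
  · rintro ⟨hne, h | h⟩ <;> refine ⟨hne, ?_⟩ <;> rw [abs_eq_abs] at h <;> omega
  · rintro ⟨hne, h⟩
    refine ⟨hne, Or.inl ?_⟩
    rw [abs_eq_abs]; omega

variable (m n ε : ℕ)

/-- The parity-`ε` squares. -/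
def pSet : Set (Fin m × Fin n) := {v | (v.1.val + v.2.val) % 2 = ε}

/-- The parity-`ε` component of the bishop's graph. -/
noncomputable def pG : SimpleGraph (pSet m n ε) := (bishopsGraph m n).induce (pSet m n ε)

variable {m n ε : ℕ}

def vrow (v : pSet m n ε) : ℕ := v.val.1.val
def vcol (v : pSet m n ε) : ℕ := v.val.2.val

lemma vrow_lt (v : pSet m n ε) : vrow v < m := v.val.1.isLt
lemma vcol_lt (v : pSet m n ε) : vcol v < n := v.val.2.isLt
lemma vpar (v : pSet m n ε) : (vrow v + vcol v) % 2 = ε := v.property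

lemma veq_iff {u v : pSet m n ε} : u = v ↔ vrow u = vrow v ∧ vcol u = vcol v := by
  constructor
  · rintro rfl; exact ⟨rfl, rfl⟩
  · rintro ⟨h1, h2⟩
    apply Subtype.ext
    apply Prod.ext <;> apply Fin.ext <;> assumption

/-- Construct a vertex. -/
def mkV (i j : ℕ) (hi : i < m) (hj : j < n) (hp : (i + j) % 2 = ε) : pSet m n ε :=
  ⟨(⟨i, hi⟩, ⟨j, hj⟩), hp⟩

@[simp] lemma vrow_mkV {i j hi hj hp} : vrow (mkV (m := m) (n := n) (ε := ε) i j hi hj hp) = i := rfl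
@[simp] lemma vcol_mkV {i j hi hj hp} : vcol (mkV (m := m) (n := n) (ε := ε) i j hi hj hp) = j := rfl

lemma adj_iff {u v : pSet m n ε} :
    (pG m n ε).Adj u v ↔ ¬(vrow u = vrow v ∧ vcol u = vcol v) ∧
      (vrow u + vcol v = vrow v + vcol u ∨ vrow u + vcol u = vrow v + vcol v) := by
  show (bishopsGraph m n).Adj u.val v.val ↔ _
  rw [bishops_adj]
  constructor
  · rintro ⟨hne, h⟩
    refine ⟨fun hc => hne ?_, h⟩
    · have := veq_iff.mpr hc; rw [this]
  · rintro ⟨hne, h⟩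
    refine ⟨fun hc => hne ?_, h⟩
    have : u = v := Subtype.ext hc
    rw [this]; exact ⟨rfl, rfl⟩

lemma adj_of_col_ne {u v : pSet m n ε}
    (h : vrow u + vcol v = vrow v + vcol u ∨ vrow u + vcol u = vrow v + vcol v)
    (hc : vcol u ≠ vcol v) : (pG m n ε).Adj u v :=
  adj_iff.mpr ⟨fun hx => hc hx.2, h⟩

/-- The row distance equals the column distance for adjacent vertices. -/
lemma adj_dist {u v : pSet m n ε} (h : (pG m n ε).Adj u v) :
    vrow u + vrow v = 2 * min (vrow u) (vrow v) + (max (vcol u) (vcol v) - min (vcol u) (vcol v)) := by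
  rw [adj_iff] at h
  obtain ⟨hne, h | h⟩ := h <;> omega

end Setup


section Counting

variable {m n ε : ℕ}

/-- Ordered adjacent pairs straddling position `t` with margin `δ`. -/
noncomputable def straddlePairs (m n ε t δ : ℕ) : Finset (pSet m n ε × pSet m n ε) :=
  Finset.univ.filter fun p => (pG m n ε).Adj p.1 p.2 ∧ vcol p.1 + δ ≤ t ∧ t < vcol p.2

/-- Code set for straddling pairs. -/
def codes (m δ : ℕ) : Finset ((_ : ℕ) × ℕ × ℕ) :=
  (Finset.range m).sigma fun k => (Finset.range (k - δ)) ×ˢ (Finset.range (m - k))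

lemma card_codes (m δ : ℕ) : (codes m δ).card = ∑ k ∈ Finset.range m, (k - δ) * (m - k) := by
  rw [codes, Finset.card_sigma]
  refine Finset.sum_congr rfl fun k _ => ?_
  rw [Finset.card_product, Finset.card_range, Finset.card_range]

lemma card_codes_zero (m : ℕ) : (codes m 0).card = sumN m := by
  rw [card_codes, sumN]; simp

lemma card_codes_one (m : ℕ) (hm : 1 ≤ m) : (codes m 1).card = sumN (m - 1) := by
  rw [card_codes]
  obtain ⟨l, rfl⟩ : ∃ l, m = l + 1 := ⟨m - 1, by omega⟩
  rw [Finset.sum_range_succ' (fun k => (k - 1) * (l + 1 - k)) l]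
  simp only [Nat.zero_sub, Nat.zero_mul, Nat.add_zero, sumN]
  refine Finset.sum_congr (by norm_num) fun j hj => ?_
  simp only [Finset.mem_range] at hj
  have h1 : j + 1 - 1 = j := by omega
  have h2 : l + 1 - (j + 1) = l - j := by omega
  have h3 : l + 1 - 1 = l := by omega
  rw [h1, h2, h3]

lemma card_straddle_le (hme : Even m) (t δ : ℕ) (hδ : δ ≤ 1) :
    (straddlePairs m n ε t δ).card ≤ (codes m δ).card := by
  classical
  apply Finset.card_le_card_of_injOn (f := fun p =>
    (⟨vcol p.2 - vcol p.1,
      (t - vcol p.1 - δ,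
       if (vcol p.2 - vcol p.1) % 2 = 1 then min (vrow p.1) (vrow p.2)
       else 2 * (min (vrow p.1) (vrow p.2) / 2) + (if vrow p.1 < vrow p.2 then 0 else 1))⟩ :
      (_ : ℕ) × ℕ × ℕ))
  · intro p hp
    simp only [straddlePairs, Finset.mem_coe, Finset.mem_filter, Finset.mem_univ, true_and] at hp
    obtain ⟨hadj, hc1, hc2⟩ := hp
    rw [adj_iff] at hadj
    obtain ⟨hne, hd⟩ := hadj
    set i1 := vrow p.1; set i2 := vrow p.2; set j1 := vcol p.1; set j2 := vcol p.2
    have hi1 : i1 < m := vrow_lt p.1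
    have hi2 : i2 < m := vrow_lt p.2
    have hj12 : j1 < j2 := by omega
    have hk : i1 + (j2 - j1) = i2 ∨ i2 + (j2 - j1) = i1 := by omega
    have hm2 : m % 2 = 0 := Nat.even_iff.mp hme
    simp only [codes, Finset.mem_coe, Finset.mem_sigma, Finset.mem_range, Finset.mem_product]
    refine ⟨by omega, by omega, ?_⟩
    -- b < m - k
    have hp1 := vpar p.1
    have hp2 := vpar p.2
    split_ifs with h1 h2 <;> omega
  · intro p hp q hq heq
    simp only [straddlePairs, Finset.coe_filter, Set.mem_setOf_eq, Finset.mem_univ,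
      true_and] at hp hq
    obtain ⟨hadjp, hcp1, hcp2⟩ := hp
    obtain ⟨hadjq, hcq1, hcq2⟩ := hq
    rw [adj_iff] at hadjp hadjq
    obtain ⟨hnep, hdp⟩ := hadjp
    obtain ⟨hneq, hdq⟩ := hadjq
    simp only [Sigma.mk.inj_iff, Prod.mk.injEq, heq_eq_eq] at heq
    obtain ⟨hk, ha, hb⟩ := heq
    have hp1 := vpar p.1
    have hp2 := vpar p.2
    have hq1 := vpar q.1
    have hq2 := vpar q.2
    have e1 : vcol p.1 = vcol q.1 := by omega
    have e2 : vcol p.2 = vcol q.2 := by omega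
    have hpj : vcol p.1 < vcol p.2 := by omega
    have hqj : vcol q.1 < vcol q.2 := by omega
    have hrows : vrow p.1 = vrow q.1 ∧ vrow p.2 = vrow q.2 := by
      split_ifs at hb with hpar <;> omega
    refine Prod.ext (veq_iff.mpr ⟨hrows.1, e1⟩) (veq_iff.mpr ⟨hrows.2, e2⟩)

end Counting


section Separation

variable {m n ε : ℕ}

/-- The cut of all edges crossing the gap between columns `t` and `t+1`. -/
noncomputable def gapCut (m n ε t : ℕ) : Finset (Sym2 (pSet m n ε)) :=
  (straddlePairs m n ε t 0).image fun p => s(p.1, p.2)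

lemma gapCut_subset_edgeSet (t : ℕ) :
    (gapCut m n ε t : Set (Sym2 (pSet m n ε))) ⊆ (pG m n ε).edgeSet := by
  intro e he
  simp only [gapCut, Finset.coe_image, Set.mem_image, Finset.mem_coe] at he
  obtain ⟨p, hp, rfl⟩ := he
  simp only [straddlePairs, Finset.mem_filter] at hp
  exact hp.2.1

lemma card_gapCut_le (hme : Even m) (t : ℕ) : (gapCut m n ε t).card ≤ sumN m := by
  calc (gapCut m n ε t).card ≤ (straddlePairs m n ε t 0).card := Finset.card_image_le
    _ ≤ (codes m 0).card := card_straddle_le hme t 0 (by omega)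
    _ = sumN m := card_codes_zero m

lemma mem_gapCut_of_straddle {t : ℕ} {u v : pSet m n ε} (hadj : (pG m n ε).Adj u v)
    (h1 : vcol u ≤ t) (h2 : t < vcol v) : s(u, v) ∈ gapCut m n ε t := by
  simp only [gapCut, Finset.mem_image]
  exact ⟨(u, v), by simp [straddlePairs, hadj, h1, h2], rfl⟩

lemma not_mem_gapCut_left {t : ℕ} {u v : pSet m n ε}
    (h1 : vcol u ≤ t) (h2 : vcol v ≤ t) : s(u, v) ∉ gapCut m n ε t := by
  intro hmem
  simp only [gapCut, Finset.mem_image] at hmem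
  obtain ⟨p, hp, heq⟩ := hmem
  simp only [straddlePairs, Finset.mem_filter] at hp
  rw [Sym2.eq_iff] at heq
  rcases heq with ⟨rfl, rfl⟩ | ⟨rfl, rfl⟩ <;> omega

lemma not_mem_gapCut_right {t : ℕ} {u v : pSet m n ε}
    (h1 : t < vcol u) (h2 : t < vcol v) : s(u, v) ∉ gapCut m n ε t := by
  intro hmem
  simp only [gapCut, Finset.mem_image] at hmem
  obtain ⟨p, hp, heq⟩ := hmem
  simp only [straddlePairs, Finset.mem_filter] at hp
  rw [Sym2.eq_iff] at heq
  rcases heq with ⟨rfl, rfl⟩ | ⟨rfl, rfl⟩ <;> omega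

lemma side_of_reachable {t : ℕ} {u v : pSet m n ε}
    (h : ((pG m n ε).deleteEdges (gapCut m n ε t : Set (Sym2 (pSet m n ε)))).Reachable u v) :
    (vcol u ≤ t ↔ vcol v ≤ t) := by
  obtain ⟨w⟩ := h
  induction w with
  | nil => rfl
  | @cons a b c hab w ih =>
    refine Iff.trans ?_ ih
    rw [SimpleGraph.deleteEdges_adj] at hab
    obtain ⟨hadj, hne⟩ := hab
    constructor
    · intro h1
      by_contra h2
      exact hne (mem_gapCut_of_straddle hadj h1 (by omega))
    · intro h1
      by_contra h2
      exact hne (Sym2.eq_swap ▸ mem_gapCut_of_straddle hadj.symm h1 (by omega))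

/-- If an egg's internal edges avoid `F`, induced connectivity gives reachability in
the edge-deleted graph. -/
lemma reachable_deleteEdges_of_connected {F : Finset (Sym2 (pSet m n ε))}
    {A : Finset (pSet m n ε)}
    (hconn : ((pG m n ε).induce (A : Set (pSet m n ε))).Connected)
    (hF : ∀ x ∈ A, ∀ y ∈ A, s(x, y) ∉ F) :
    ∀ a ∈ A, ∀ a' ∈ A,
      ((pG m n ε).deleteEdges (F : Set (Sym2 (pSet m n ε)))).Reachable a a' := by
  intro a ha a' ha'
  exact Reachable.map
    (⟨Subtype.val, fun {x y} hadj => by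
      rw [SimpleGraph.deleteEdges_adj]
      exact ⟨hadj, hF x.val x.property y.val y.property⟩⟩ :
      ((pG m n ε).induce (A : Set (pSet m n ε))) →g
      ((pG m n ε).deleteEdges (F : Set (Sym2 (pSet m n ε)))))
    (hconn ⟨a, ha⟩ ⟨a', ha'⟩)

end Separation


section Upper

variable {m n ε : ℕ}

lemma exists_straddle_pair {c : ℕ} {E : Finset (pSet m n ε)}
    (hconn : ((pG m n ε).induce (E : Set (pSet m n ε))).Connected)
    (hno : ∀ v ∈ E, vcol v ≠ c) {u w : pSet m n ε} (hu : u ∈ E) (hw : w ∈ E)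
    (hcu : vcol u < c) (hcw : c < vcol w) :
    ∃ p ∈ E, ∃ q ∈ E, (pG m n ε).Adj p q ∧ vcol p < c ∧ c < vcol q := by
  have key : ∀ (a b : (E : Set (pSet m n ε))),
      ((pG m n ε).induce (E : Set (pSet m n ε))).Walk a b →
      c < vcol b.val → vcol a.val < c →
      ∃ p ∈ E, ∃ q ∈ E, (pG m n ε).Adj p q ∧ vcol p < c ∧ c < vcol q := by
    intro a b W
    induction W with
    | nil => intro h1 h2; omega
    | @cons a x _ hadj W ih =>
      intro h1 h2
      have hx : (x : pSet m n ε) ∈ E := x.property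
      rcases lt_trichotomy (vcol (x : pSet m n ε)) c with h | h | h
      · exact ih h1 h
      · exact absurd h (hno _ hx)
      · exact ⟨a, a.property, x, hx, hadj, h2, h⟩
  obtain ⟨W⟩ := hconn ⟨u, hu⟩ ⟨w, hw⟩
  exact key _ _ W hcw hcu

/-- The hitting set for Case 2: column `c` plus left endpoints of skipping edges. -/
noncomputable def caseTwoHit (m n ε c : ℕ) : Finset (pSet m n ε) :=
  (Finset.univ.filter fun v => vcol v = c) ∪ (straddlePairs m n ε c 1).image Prod.fst

lemma card_caseTwoHit_le (hme : Even m) (hm : 4 ≤ m) (c : ℕ) :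
    (caseTwoHit m n ε c).card ≤ sumN m := by
  have h1 : (Finset.univ.filter fun v : pSet m n ε => vcol v = c).card ≤ m := by
    have := Finset.card_le_card_of_injOn (f := fun v : pSet m n ε => vrow v)
      (s := Finset.univ.filter fun v : pSet m n ε => vcol v = c) (t := Finset.range m)
      (fun v _ => Finset.mem_range.mpr (vrow_lt v))
      (by
        intro x hx y hy hxy
        simp only [Finset.coe_filter, Set.mem_setOf_eq] at hx hy
        exact veq_iff.mpr ⟨hxy, by omega⟩)
    simpa using this
  have h2 : ((straddlePairs m n ε c 1).image Prod.fst).card ≤ sumN (m - 1) := by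
    calc ((straddlePairs m n ε c 1).image Prod.fst).card
        ≤ (straddlePairs m n ε c 1).card := Finset.card_image_le
      _ ≤ (codes m 1).card := card_straddle_le hme c 1 (le_refl 1)
      _ = sumN (m - 1) := card_codes_one m (by omega)
  have hcard := Finset.card_union_le
    (Finset.univ.filter fun v : pSet m n ε => vcol v = c)
    ((straddlePairs m n ε c 1).image Prod.fst)
  -- arithmetic: m + sumN (m-1) ≤ sumN m for m ≥ 3
  have harith : m + sumN (m - 1) ≤ sumN m := by
    obtain ⟨j, rfl⟩ : ∃ j, m = j + 4 := ⟨m - 4, by omega⟩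
    have e3 : 6 * sumN (j + 4) = (j + 3) * (j + 4) * (j + 5) := by
      rw [sumN_eq]
      have h5 : j + 4 - 1 = j + 3 := by omega
      rw [h5]
    have e4 : 6 * sumN (j + 4 - 1) = (j + 2) * (j + 3) * (j + 4) := by
      have h5 : j + 4 - 1 = j + 3 := by omega
      rw [h5, sumN_eq]
      have h6 : j + 3 - 1 = j + 2 := by omega
      rw [h6]
    nlinarith [e3, e4, sq_nonneg j]
  calc (caseTwoHit m n ε c).card
      ≤ (Finset.univ.filter fun v : pSet m n ε => vcol v = c).card +
        ((straddlePairs m n ε c 1).image Prod.fst).card := hcard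
    _ ≤ m + sumN (m - 1) := Nat.add_le_add h1 h2
    _ ≤ sumN m := harith

/-- Upper bound: every scramble on the bishop component has order at most `sumN m`. -/
lemma scrambleOrder_le (hme : Even m) (hm : 4 ≤ m) (S : Scramble (pG m n ε)) :
    scrambleOrder S ≤ (sumN m : ℕ∞) := by
  -- c = least t such that some egg lies within columns ≤ t
  set T : Set ℕ := {t | ∃ E ∈ S.eggs, ∀ v ∈ E, vcol v ≤ t} with hT
  have hTne : T.Nonempty := by
    obtain ⟨E, hE⟩ := S.eggs_nonempty
    exact ⟨n, E, hE, fun v _ => le_of_lt (vcol_lt v)⟩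
  set c := sInf T with hc
  have hcmem : c ∈ T := Nat.sInf_mem hTne
  obtain ⟨A, hA, hAle⟩ := hcmem
  have hlow : ∀ E ∈ S.eggs, ∃ v ∈ E, c ≤ vcol v := by
    intro E hE
    by_contra hcon
    push_neg at hcon
    have hc1 : 1 ≤ c := by
      rcases Nat.eq_zero_or_pos c with h0 | h
      · obtain ⟨v, hv⟩ := S.egg_nonempty E hE
        have := hcon v hv; omega
      · exact h
    have : c - 1 ∈ T := ⟨E, hE, fun v hv => by have := hcon v hv; omega⟩
    have := Nat.sInf_le this
    omega
  by_cases hcase : ∃ B ∈ S.eggs, ∀ v ∈ B, c < vcol v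
  · -- egg-cut case
    obtain ⟨B, hB, hBgt⟩ := hcase
    have hcut : IsEggCut S (gapCut m n ε c) := by
      refine ⟨gapCut_subset_edgeSet c, A, hA, B, hB, ?_, ?_, ?_⟩
      · exact reachable_deleteEdges_of_connected (S.egg_connected A hA)
          (fun x hx y hy => not_mem_gapCut_left (hAle x hx) (hAle y hy))
      · exact reachable_deleteEdges_of_connected (S.egg_connected B hB)
          (fun x hx y hy => not_mem_gapCut_right (hBgt x hx) (hBgt y hy))
      · intro a ha b hb hreach
        have := side_of_reachable hreach
        have h1 := hAle a ha
        have h2 := hBgt b hb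
        omega
    have hle : eggCutNumber S ≤ ((gapCut m n ε c).card : ℕ∞) :=
      sInf_le ⟨gapCut m n ε c, hcut, rfl⟩
    calc scrambleOrder S ≤ eggCutNumber S := min_le_right _ _
      _ ≤ ((gapCut m n ε c).card : ℕ∞) := hle
      _ ≤ (sumN m : ℕ∞) := by
          exact_mod_cast Nat.cast_le.mpr (card_gapCut_le hme c)
  · -- hitting set case
    push_neg at hcase
    have hhit : IsHittingSet S (caseTwoHit m n ε c) := by
      intro E hE
      by_cases hex : ∃ v ∈ E, vcol v = c
      · obtain ⟨v, hv, hvc⟩ := hex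
        refine ⟨v, ?_⟩
        simp only [Finset.mem_inter]
        exact ⟨hv, Finset.mem_union_left _
          (Finset.mem_filter.mpr ⟨Finset.mem_univ _, hvc⟩)⟩
      · push_neg at hex
        obtain ⟨u, hu, hcu⟩ := hcase E hE
        obtain ⟨w, hw, hcw⟩ := hlow E hE
        have hcu' : vcol u < c := lt_of_le_of_ne hcu (hex u hu)
        have hcw' : c < vcol w := lt_of_le_of_ne hcw (Ne.symm (hex w hw))
        obtain ⟨p, hp, q, hq, hadj, hp1, hp2⟩ :=
          exists_straddle_pair (S.egg_connected E hE) hex hu hw hcu' hcw'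
        refine ⟨p, ?_⟩
        simp only [Finset.mem_inter]
        refine ⟨hp, Finset.mem_union_right _ ?_⟩
        refine Finset.mem_image.mpr ⟨(p, q), ?_, rfl⟩
        simp only [straddlePairs, Finset.mem_filter, Finset.mem_univ, true_and]
        exact ⟨hadj, by omega, hp2⟩
    have hle : hittingNumber S ≤ ((caseTwoHit m n ε c).card : ℕ∞) :=
      sInf_le ⟨caseTwoHit m n ε c, hhit, rfl⟩
    calc scrambleOrder S ≤ hittingNumber S := min_le_left _ _
      _ ≤ ((caseTwoHit m n ε c).card : ℕ∞) := hle
      _ ≤ (sumN m : ℕ∞) := by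
          exact_mod_cast Nat.cast_le.mpr (card_caseTwoHit_le hme hm c)

end Upper

section StripConn

variable {m n ε : ℕ}

/-- A vertical strip of `m` consecutive columns starting at column `a`. -/
noncomputable def strip (m n ε a : ℕ) : Finset (pSet m n ε) :=
  Finset.univ.filter fun v => a ≤ vcol v ∧ vcol v < a + m

lemma mem_strip {a : ℕ} {v : pSet m n ε} :
    v ∈ strip m n ε a ↔ a ≤ vcol v ∧ vcol v < a + m := by
  simp [strip]

lemma sg_adj {a : ℕ} {x y : (strip m n ε a : Set (pSet m n ε))}
    (h : (pG m n ε).Adj x.val y.val) :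
    ((pG m n ε).induce (strip m n ε a : Set (pSet m n ε))).Adj x y := h

/-- Construct a strip vertex. -/
noncomputable def stripV (a i j : ℕ) (hi : i < m) (hj : j < n) (hp : (i + j) % 2 = ε)
    (h1 : a ≤ j) (h2 : j < a + m) : (strip m n ε a : Set (pSet m n ε)) :=
  ⟨mkV i j hi hj hp, by rw [Finset.mem_coe, mem_strip]; simp; omega⟩

@[simp] lemma stripV_row {a i j hi hj hp h1 h2} :
    vrow (stripV (m := m) (n := n) (ε := ε) a i j hi hj hp h1 h2).val = i := rfl
@[simp] lemma stripV_col {a i j hi hj hp h1 h2} :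
    vcol (stripV (m := m) (n := n) (ε := ε) a i j hi hj hp h1 h2).val = j := rfl

lemma strip_facts {a : ℕ} (x : (strip m n ε a : Set (pSet m n ε))) :
    a ≤ vcol x.val ∧ vcol x.val < a + m ∧ vrow x.val < m ∧ vcol x.val < n ∧
      (vrow x.val + vcol x.val) % 2 = ε := by
  have hx := x.property
  rw [Finset.mem_coe, mem_strip] at hx
  exact ⟨hx.1, hx.2, vrow_lt _, vcol_lt _, vpar _⟩

lemma strip_to_boundary {a : ℕ} (hm : 4 ≤ m) (ha : a + m ≤ n)
    (x : (strip m n ε a : Set (pSet m n ε))) :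
    ∃ y : (strip m n ε a : Set (pSet m n ε)), (vrow y.val = 0 ∨ vrow y.val = m - 1) ∧
      ((pG m n ε).induce (strip m n ε a : Set (pSet m n ε))).Reachable x y := by
  obtain ⟨h1, h2, h3, h4, h5⟩ := strip_facts x
  by_cases hi0 : vrow x.val = 0
  · exact ⟨x, Or.inl hi0, Reachable.refl x⟩
  by_cases him : vrow x.val = m - 1
  · exact ⟨x, Or.inr him, Reachable.refl x⟩
  by_cases hc : a + vrow x.val ≤ vcol x.val
  · refine ⟨stripV a 0 (vcol x.val - vrow x.val) (by omega) (by omega) (by omega)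
      (by omega) (by omega), Or.inl rfl, Adj.reachable (sg_adj ?_)⟩
    apply adj_of_col_ne
    · left; simp; omega
    · simp; omega
  · refine ⟨stripV a (m - 1) (vcol x.val + (m - 1 - vrow x.val)) (by omega) (by omega)
      (by omega) (by omega) (by omega), Or.inr rfl, Adj.reachable (sg_adj ?_)⟩
    apply adj_of_col_ne
    · left; simp; omega
    · simp; omega

lemma strip_row_connect {a : ℕ} (hm : 4 ≤ m) (ha : a + m ≤ n)
    (x y : (strip m n ε a : Set (pSet m n ε))) (hxy : vrow x.val = vrow y.val)
    (hrow : vrow x.val = 0 ∨ vrow x.val = m - 1) :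
    ((pG m n ε).induce (strip m n ε a : Set (pSet m n ε))).Reachable x y := by
  have key : ∀ x y : (strip m n ε a : Set (pSet m n ε)), vrow x.val = vrow y.val →
      (vrow x.val = 0 ∨ vrow x.val = m - 1) → vcol x.val ≤ vcol y.val →
      ((pG m n ε).induce (strip m n ε a : Set (pSet m n ε))).Reachable x y := by
    intro x y hxy hrow hle
    obtain ⟨h1, h2, h3, h4, h5⟩ := strip_facts x
    obtain ⟨g1, g2, g3, g4, g5⟩ := strip_facts y
    by_cases hceq : vcol x.val = vcol y.val
    · have : x = y := Subtype.ext (veq_iff.mpr ⟨hxy, hceq⟩)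
      rw [this]
    · have hclt : vcol x.val < vcol y.val := by omega
      have heven : (vcol y.val - vcol x.val) % 2 = 0 := by omega
      set d := (vcol y.val - vcol x.val) / 2 with hd
      have hd1 : 1 ≤ d := by omega
      have hd2 : vcol y.val = vcol x.val + 2 * d := by omega
      rcases hrow with hr | hr
      · -- row 0, via common neighbor at row d
        have hz : ((pG m n ε).induce (strip m n ε a : Set (pSet m n ε))).Reachable x
            (stripV a d (vcol x.val + d) (by omega) (by omega) (by omega) (by omega)
              (by omega)) := by
          refine Adj.reachable (sg_adj (adj_of_col_ne ?_ ?_))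
          · left; simp; omega
          · simp; omega
        refine hz.trans (Adj.reachable (sg_adj (adj_of_col_ne ?_ ?_)))
        · right; simp; omega
        · simp; omega
      · -- row m-1, via common neighbor at row m-1-d
        have hz : ((pG m n ε).induce (strip m n ε a : Set (pSet m n ε))).Reachable x
            (stripV a (m - 1 - d) (vcol x.val + d) (by omega) (by omega) (by omega)
              (by omega) (by omega)) := by
          refine Adj.reachable (sg_adj (adj_of_col_ne ?_ ?_))
          · right; simp; omega
          · simp; omega
        refine hz.trans (Adj.reachable (sg_adj (adj_of_col_ne ?_ ?_)))
        · left; simp; omega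
        · simp; omega
  rcases le_total (vcol x.val) (vcol y.val) with h | h
  · exact key x y hxy hrow h
  · exact (key y x hxy.symm (by omega) h).symm

lemma strip_bridge {a : ℕ} (hm : 4 ≤ m) (hε : ε ≤ 1) (ha : a + m ≤ n) :
    ∃ x y : (strip m n ε a : Set (pSet m n ε)), vrow x.val = 0 ∧ vrow y.val = m - 1 ∧
      ((pG m n ε).induce (strip m n ε a : Set (pSet m n ε))).Reachable x y := by
  by_cases hb : (ε + a) % 2 = 0
  · refine ⟨stripV a 0 a (by omega) (by omega) (by omega) (by omega) (by omega),
      stripV a (m - 1) (a + m - 1) (by omega) (by omega) (by omega) (by omega) (by omega),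
      rfl, rfl, Adj.reachable (sg_adj (adj_of_col_ne ?_ ?_))⟩
    · left; simp; omega
    · simp; omega
  · refine ⟨stripV a 0 (a + 1) (by omega) (by omega) (by omega) (by omega) (by omega),
      stripV a (m - 1) (a + m - 2) (by omega) (by omega) (by omega) (by omega) (by omega),
      rfl, rfl, ?_⟩
    have hz : ((pG m n ε).induce (strip m n ε a : Set (pSet m n ε))).Reachable
        (stripV a 0 (a + 1) (by omega) (by omega) (by omega) (by omega) (by omega))
        (stripV a (m - 2) (a + m - 1) (by omega) (by omega) (by omega) (by omega)
          (by omega)) := by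
      refine Adj.reachable (sg_adj (adj_of_col_ne ?_ ?_))
      · left; simp; omega
      · simp; omega
    refine hz.trans (Adj.reachable (sg_adj (adj_of_col_ne ?_ ?_)))
    · right; simp; omega
    · simp; omega

lemma strip_connected {a : ℕ} (hm : 4 ≤ m) (hε : ε ≤ 1) (ha : a + m ≤ n) :
    ((pG m n ε).induce (strip m n ε a : Set (pSet m n ε))).Connected := by
  rw [connected_iff]
  constructor
  · intro x y
    obtain ⟨bx, hbx, hrx⟩ := strip_to_boundary hm ha x
    obtain ⟨by_, hby, hry⟩ := strip_to_boundary hm ha y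
    obtain ⟨x0, y0, hx0, hy0, hbr⟩ := strip_bridge (a := a) hm hε ha
    have hbb : ((pG m n ε).induce (strip m n ε a : Set (pSet m n ε))).Reachable bx by_ := by
      rcases hbx with h1 | h1 <;> rcases hby with h2 | h2
      · exact strip_row_connect hm ha bx by_ (by omega) (Or.inl h1)
      · exact ((strip_row_connect hm ha bx x0 (by omega) (Or.inl h1)).trans hbr).trans
          (strip_row_connect hm ha y0 by_ (by omega) (Or.inr hy0))
      · exact ((strip_row_connect hm ha bx y0 (by omega) (Or.inr h1)).trans hbr.symm).trans
          (strip_row_connect hm ha x0 by_ (by omega) (Or.inl hx0))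
      · exact strip_row_connect hm ha bx by_ (by omega) (Or.inr h1)
    exact (hrx.trans hbb).trans hry.symm
  · exact ⟨stripV a ((ε + a) % 2) a (by omega) (by omega) (by omega) (by omega) (by omega)⟩

end StripConn

section Zigzag

variable {m n ε : ℕ}

/-- Row of the `q`-th vertex of the zigzag with code `(k, i₀, x)`. -/
def zr (k i₀ x q : ℕ) : ℕ := i₀ + k * ((q + x / k) % 2)

/-- Column of the `q`-th vertex of the zigzag with code `(k, i₀, x)`. -/
def zc (k x q : ℕ) : ℕ := x % k + q * k

lemma zr_lt {k i₀ x q : ℕ} (hkm : k < m) (hi : i₀ < m - k) : zr k i₀ x q < m := by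
  rw [zr]
  rcases Nat.mod_two_eq_zero_or_one (q + x / k) with h | h <;> rw [h] <;> omega

lemma zc_mono {k x : ℕ} {q q' : ℕ} (h : q ≤ q') : zc k x q ≤ zc k x q' := by
  rw [zc, zc]
  have := Nat.mul_le_mul_right k h
  omega

lemma zpar {k i₀ x q : ℕ} (hk : 1 ≤ k) (hx : x < 2 * k) :
    (zr k i₀ x q + zc k x q) % 2 = (i₀ + x) % 2 := by
  rw [zr, zc]
  have hdm := Nat.div_add_mod x k
  obtain ⟨s, hs01, hsx⟩ : ∃ s, s ≤ 1 ∧ x / k = s :=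
    ⟨x / k, by
      have : x / k < 2 := (Nat.div_lt_iff_lt_mul (by omega : 0 < k)).mpr (by omega)
      omega, rfl⟩
  obtain ⟨t, r, hr, ht⟩ : ∃ t r, r < 2 ∧ q = 2 * t + r :=
    ⟨q / 2, q % 2, Nat.mod_lt _ (by omega), by omega⟩
  rw [hsx] at hdm ⊢
  subst ht
  have htk : (2 * t + r) * k = 2 * (t * k) + r * k := by ring
  rw [htk]
  interval_cases r <;> interval_cases s <;>
    [ (have hmod : (2 * t + 0 + 0) % 2 = 0 := by omega);
      (have hmod : (2 * t + 0 + 1) % 2 = 1 := by omega);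
      (have hmod : (2 * t + 1 + 0) % 2 = 1 := by omega);
      (have hmod : (2 * t + 1 + 1) % 2 = 0 := by omega)] <;>
    rw [hmod] <;> simp only [Nat.mul_zero, Nat.mul_one] <;> omega

lemma z_adj {k i₀ x q : ℕ} (hk : 1 ≤ k) (hkm : k < m) (hi : i₀ < m - k)
    {u v : pSet m n ε} (hru : vrow u = zr k i₀ x q) (hcu : vcol u = zc k x q)
    (hrv : vrow v = zr k i₀ x (q + 1)) (hcv : vcol v = zc k x (q + 1)) :
    (pG m n ε).Adj u v := by
  rw [zr] at hru hrv
  rw [zc] at hcu hcv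
  have h1 : (q + 1) * k = q * k + k := by ring
  have h2 : (q + 1 + x / k) % 2 + (q + x / k) % 2 = 1 := by omega
  apply adj_of_col_ne
  · rcases Nat.mod_two_eq_zero_or_one (q + x / k) with h | h <;>
      rw [h] at hru <;>
      [ (have h3 : (q + 1 + x / k) % 2 = 1 := by omega);
        (have h3 : (q + 1 + x / k) % 2 = 0 := by omega)] <;>
      rw [h3] at hrv <;> [left; right] <;> omega
  · omega

/-- Walking along a zigzag in the cut graph, provided its edges avoid `F`. -/
lemma zig_reach {k i₀ x : ℕ} (hk : 1 ≤ k) (hkm : k < m) (hi : i₀ < m - k)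
    (hx : x < 2 * k) (hp : (i₀ + x) % 2 = ε) (F : Finset (Sym2 (pSet m n ε)))
    (q1 q2 : ℕ) (hq : q1 ≤ q2) (hcol : zc k x q2 < n)
    (hF : ∀ q, q1 ≤ q → q < q2 → ∀ u v : pSet m n ε,
      vrow u = zr k i₀ x q → vcol u = zc k x q →
      vrow v = zr k i₀ x (q + 1) → vcol v = zc k x (q + 1) → s(u, v) ∉ F) :
    ∀ u v : pSet m n ε, vrow u = zr k i₀ x q1 → vcol u = zc k x q1 →
      vrow v = zr k i₀ x q2 → vcol v = zc k x q2 →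
      ((pG m n ε).deleteEdges (F : Set (Sym2 (pSet m n ε)))).Reachable u v := by
  induction q2, hq using Nat.le_induction with
  | base =>
    intro u v h1 h2 h3 h4
    have : u = v := veq_iff.mpr ⟨by omega, by omega⟩
    rw [this]
  | succ q hq ih =>
    intro u v h1 h2 h3 h4
    have hcol' : zc k x q < n := lt_of_le_of_lt (zc_mono (by omega)) hcol
    -- intermediate vertex at step q
    have hwlt : zr k i₀ x q < m := zr_lt hkm hi
    have hwpar : (zr k i₀ x q + zc k x q) % 2 = ε := by rw [zpar hk hx]; exact hp
    set w : pSet m n ε := mkV (zr k i₀ x q) (zc k x q) hwlt hcol' hwpar with hw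
    have hru : vrow w = zr k i₀ x q := rfl
    have hcu : vcol w = zc k x q := rfl
    have hreach : ((pG m n ε).deleteEdges (F : Set (Sym2 (pSet m n ε)))).Reachable u w :=
      ih hcol' (fun q' hq1 hq2 => hF q' hq1 (by omega)) u w h1 h2 hru hcu
    refine hreach.trans (Adj.reachable ?_)
    rw [SimpleGraph.deleteEdges_adj]
    refine ⟨z_adj hk hkm hi hru hcu h3 h4, ?_⟩
    exact fun hmem => hF q (by omega) (by omega) w v hru hcu h3 h4 hmem

/-- There is a zigzag vertex in each strip. -/
lemma exists_q_strip {k c : ℕ} (hk : 1 ≤ k) (hkm : k < m) (hc : c < k) (t : ℕ) :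
    ∃ q, t * m ≤ c + q * k ∧ c + q * k < t * m + m := by
  by_cases h : t * m ≤ c
  · exact ⟨0, by omega⟩
  · push_neg at h
    obtain ⟨D, R, hR, hDR⟩ : ∃ D R, R < k ∧ t * m - c + k - 1 = k * D + R :=
      ⟨(t * m - c + k - 1) / k, (t * m - c + k - 1) % k, Nat.mod_lt _ (by omega),
        (Nat.div_add_mod _ _).symm⟩
    have hcomm : k * D = D * k := Nat.mul_comm _ _
    exact ⟨D, by omega, by omega⟩

/-- The zigzag code set. -/
noncomputable def zigCodes (m ε : ℕ) : Finset ((_ : ℕ) × (_ : ℕ) × ℕ) :=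
  (Finset.range m).sigma fun k => (Finset.range (m - k)).sigma fun i₀ =>
    (Finset.range (2 * k)).filter fun x => (i₀ + x) % 2 = ε

lemma card_parity_filter (a e : ℕ) (he : e ≤ 1) :
    ∀ k, ((Finset.range (2 * k)).filter fun x => (a + x) % 2 = e).card = k := by
  intro k
  induction k with
  | zero => simp
  | succ k ih =>
    have h2 : 2 * (k + 1) = 2 * k + 1 + 1 := by ring
    rw [h2, Finset.range_add_one, Finset.range_add_one, Finset.filter_insert, Finset.filter_insert]
    have hm1 : (2 * k) ∉ Finset.range (2 * k) := by simp
    have hm2 : (2 * k + 1) ∉ insert (2 * k) (Finset.range (2 * k)) := by simp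
    have hm3 : (2 * k + 1) ∉ Finset.range (2 * k) := by simp
    by_cases hc : (a + 2 * k) % 2 = e
    · have hc2 : ¬ (a + (2 * k + 1)) % 2 = e := by omega
      rw [if_neg hc2, if_pos hc, Finset.card_insert_of_notMem
        (fun hmem => hm1 (Finset.mem_of_mem_filter _ hmem)), ih]
    · have hc2 : (a + (2 * k + 1)) % 2 = e := by omega
      rw [if_pos hc2, if_neg hc, Finset.card_insert_of_notMem
        (fun hmem => hm3 (Finset.mem_of_mem_filter _ hmem)), ih]

lemma card_zigCodes (hε : ε ≤ 1) : (zigCodes m ε).card = sumN m := by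
  rw [zigCodes, Finset.card_sigma, sumN]
  refine Finset.sum_congr rfl fun k _ => ?_
  rw [Finset.card_sigma]
  have hin : ∀ i₀ ∈ Finset.range (m - k),
      ((Finset.range (2 * k)).filter fun x => (i₀ + x) % 2 = ε).card = k :=
    fun i₀ _ => card_parity_filter i₀ ε hε k
  rw [Finset.sum_congr rfl hin, Finset.sum_const, Finset.card_range, smul_eq_mul,
    Nat.mul_comm]

lemma mem_zigCodes {z : (_ : ℕ) × (_ : ℕ) × ℕ} (hz : z ∈ zigCodes m ε) :
    1 ≤ z.1 ∧ z.1 < m ∧ z.2.1 < m - z.1 ∧ z.2.2 < 2 * z.1 ∧ (z.2.1 + z.2.2) % 2 = ε := by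
  simp only [zigCodes, Finset.mem_sigma, Finset.mem_filter, Finset.mem_range] at hz
  exact ⟨by omega, hz.1, hz.2.1, hz.2.2.1, hz.2.2.2⟩

end Zigzag

section ZigB

variable {m n ε : ℕ}

lemma zig_core {k k' i₀ i₀' x x' q q' : ℕ} (hk : 1 ≤ k) (hk' : 1 ≤ k')
    (hx : x < 2 * k) (hx' : x' < 2 * k')
    (hc1 : zc k x q = zc k' x' q') (hc2 : zc k x (q + 1) = zc k' x' (q' + 1))
    (hr1 : zr k i₀ x q = zr k' i₀' x' q') (hr2 : zr k i₀ x (q + 1) = zr k' i₀' x' (q' + 1)) :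
    k = k' ∧ i₀ = i₀' ∧ x = x' := by
  simp only [zc] at hc1 hc2
  simp only [zr] at hr1 hr2
  have e1 : (q + 1) * k = q * k + k := by ring
  have e2 : (q' + 1) * k' = q' * k' + k' := by ring
  have hkk : k = k' := by omega
  subst hkk
  have hmc : x % k < k := Nat.mod_lt _ (by omega)
  have hmc' : x' % k < k := Nat.mod_lt _ (by omega)
  have hq : q = q' ∧ x % k = x' % k := by
    rcases le_total q q' with h | h
    · obtain ⟨d, rfl⟩ := Nat.exists_eq_add_of_le h
      have hd : (q + d) * k = q * k + d * k := by ring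
      rcases Nat.eq_zero_or_pos d with rfl | hdp
      · constructor <;> omega
      · have h1k : 1 * k ≤ d * k := Nat.mul_le_mul_right k hdp
        omega
    · obtain ⟨d, rfl⟩ := Nat.exists_eq_add_of_le h
      have hd : (q' + d) * k = q' * k + d * k := by ring
      rcases Nat.eq_zero_or_pos d with rfl | hdp
      · constructor <;> omega
      · have h1k : 1 * k ≤ d * k := Nat.mul_le_mul_right k hdp
        omega
  obtain ⟨rfl, hmceq⟩ := hq
  have hdm := Nat.div_add_mod x k
  have hdm' := Nat.div_add_mod x' k
  obtain ⟨s, hs2, hsx⟩ : ∃ s, s < 2 ∧ x / k = s :=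
    ⟨_, (Nat.div_lt_iff_lt_mul (by omega)).mpr (by omega), rfl⟩
  obtain ⟨s', hs2', hsx'⟩ : ∃ s', s' < 2 ∧ x' / k = s' :=
    ⟨_, (Nat.div_lt_iff_lt_mul (by omega)).mpr (by omega), rfl⟩
  rw [hsx] at hdm hr1 hr2
  rw [hsx'] at hdm' hr1 hr2
  have hseq : s = s' ∧ i₀ = i₀' := by
    have hq1 : (q + s) % 2 = 0 ∨ (q + s) % 2 = 1 := by omega
    have hq1' : (q + s') % 2 = 0 ∨ (q + s') % 2 = 1 := by omega
    have hq2 : (q + 1 + s) % 2 + (q + s) % 2 = 1 := by omega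
    have hq2' : (q + 1 + s') % 2 + (q + s') % 2 = 1 := by omega
    rcases hq1 with h1 | h1 <;> rcases hq1' with h1' | h1' <;>
      rw [h1, h1'] at hr1 <;>
      [ (rw [(by omega : (q + 1 + s) % 2 = 1), (by omega : (q + 1 + s') % 2 = 1)] at hr2);
        (rw [(by omega : (q + 1 + s) % 2 = 1), (by omega : (q + 1 + s') % 2 = 0)] at hr2);
        (rw [(by omega : (q + 1 + s) % 2 = 0), (by omega : (q + 1 + s') % 2 = 1)] at hr2);
        (rw [(by omega : (q + 1 + s) % 2 = 0), (by omega : (q + 1 + s') % 2 = 0)] at hr2)] <;>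
      omega
  obtain ⟨rfl, rfl⟩ : s = s' ∧ i₀ = i₀' := hseq
  have hmul : k * s = k * s := rfl
  exact ⟨rfl, rfl, by omega⟩

lemma sumN_pos (hm : 4 ≤ m) : 1 ≤ sumN m := by
  have h6 := sumN_eq m
  have hpos : 0 < (m - 1) * m * (m + 1) :=
    Nat.mul_pos (Nat.mul_pos (by omega) (by omega)) (by omega)
  omega

/-- Any edge set separating two distinct strips has at least `sumN m` edges. -/
lemma cut_lower (hm : 4 ≤ m) (hε : ε ≤ 1) (hnm : sumN m * m ≤ n)
    (F : Finset (Sym2 (pSet m n ε))) {a b : ℕ} (hsa : a < sumN m) (htb : b < sumN m)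
    (hsep : ∀ u v : pSet m n ε, u ∈ strip m n ε (a * m) → v ∈ strip m n ε (b * m) →
      ¬ ((pG m n ε).deleteEdges (F : Set (Sym2 (pSet m n ε)))).Reachable u v) :
    sumN m ≤ F.card := by
  classical
  have hn4 : 4 ≤ n := by
    have h1 : 1 * m ≤ sumN m * m := Nat.mul_le_mul_right m (sumN_pos hm)
    omega
  have hex : ∀ z ∈ zigCodes m ε, ∃ e, e ∈ F ∧ ∃ q, ∃ u v : pSet m n ε, e = s(u, v) ∧
      vrow u = zr z.1 z.2.1 z.2.2 q ∧ vcol u = zc z.1 z.2.2 q ∧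
      vrow v = zr z.1 z.2.1 z.2.2 (q + 1) ∧ vcol v = zc z.1 z.2.2 (q + 1) := by
    rintro ⟨k, i₀, x⟩ hz
    obtain ⟨hk1, hkm, hi, hx, hp⟩ := mem_zigCodes hz
    dsimp only at hk1 hkm hi hx hp ⊢
    have hmck : x % k < k := Nat.mod_lt _ (by omega)
    obtain ⟨qa, hqa1, hqa2⟩ := exists_q_strip (m := m) hk1 hkm hmck a
    obtain ⟨qb, hqb1, hqb2⟩ := exists_q_strip (m := m) hk1 hkm hmck b
    by_contra hcon
    push_neg at hcon
    have hF : ∀ (q : ℕ) (u v : pSet m n ε),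
        vrow u = zr k i₀ x q → vcol u = zc k x q →
        vrow v = zr k i₀ x (q + 1) → vcol v = zc k x (q + 1) → s(u, v) ∉ F := by
      intro q u v h1 h2 h3 h4 hmem
      exact hcon s(u, v) hmem q u v rfl h1 h2 h3 h4
    have hcolbound : ∀ c : ℕ, c < sumN m → c * m + m ≤ n := by
      intro c hc
      have : (c + 1) * m ≤ sumN m * m := Nat.mul_le_mul_right m (by omega)
      have hcm : (c + 1) * m = c * m + m := by ring
      omega
    have hca := hcolbound a hsa
    have hcb := hcolbound b htb
    have hza : zc k x qa < n := by rw [zc]; omega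
    have hzb : zc k x qb < n := by rw [zc]; omega
    have hparq : ∀ q, (zr k i₀ x q + zc k x q) % 2 = ε := by
      intro q; rw [zpar hk1 hx]; exact hp
    rcases le_total qa qb with hle | hle
    · have hreach := zig_reach hk1 hkm hi hx hp F qa qb hle hzb
        (fun q _ _ => hF q)
        (mkV (zr k i₀ x qa) (zc k x qa) (zr_lt hkm hi) hza (hparq qa))
        (mkV (zr k i₀ x qb) (zc k x qb) (zr_lt hkm hi) hzb (hparq qb))
        rfl rfl rfl rfl
      exact hsep _ _ (mem_strip.mpr (by constructor <;> simp [zc] <;> omega))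
        (mem_strip.mpr (by constructor <;> simp [zc] <;> omega)) hreach
    · have hreach := zig_reach hk1 hkm hi hx hp F qb qa hle hza
        (fun q _ _ => hF q)
        (mkV (zr k i₀ x qb) (zc k x qb) (zr_lt hkm hi) hzb (hparq qb))
        (mkV (zr k i₀ x qa) (zc k x qa) (zr_lt hkm hi) hza (hparq qa))
        rfl rfl rfl rfl
      exact hsep _ _ (mem_strip.mpr (by constructor <;> simp [zc] <;> omega))
        (mem_strip.mpr (by constructor <;> simp [zc] <;> omega)) hreach.symm
  -- choose an F-edge for each zigzag code, injectively
  set f : ((_ : ℕ) × (_ : ℕ) × ℕ) → Sym2 (pSet m n ε) := fun z =>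
    if h : z ∈ zigCodes m ε then (hex z h).choose
    else s(mkV ε 0 (by omega) (by omega) (by omega),
           mkV ε 0 (by omega) (by omega) (by omega)) with hf
  rw [← card_zigCodes hε]
  apply Finset.card_le_card_of_injOn f
  · intro z hz
    simp only [hf, dif_pos (Finset.mem_coe.mp hz), Finset.mem_coe]
    exact ((hex z hz).choose_spec).1
  · rintro ⟨k, i₀, x⟩ hz ⟨k', i₀', x'⟩ hz' hfeq
    rw [Finset.mem_coe] at hz hz'
    simp only [hf, dif_pos hz, dif_pos hz'] at hfeq
    obtain ⟨-, q, u, v, he, h1, h2, h3, h4⟩ := (hex _ hz).choose_spec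
    obtain ⟨-, q', u', v', he', h1', h2', h3', h4'⟩ := (hex _ hz').choose_spec
    rw [he, he'] at hfeq
    dsimp only at h1 h2 h3 h4 h1' h2' h3' h4'
    obtain ⟨hk1, hkm, hi, hx, hp⟩ := mem_zigCodes hz
    obtain ⟨hk1', hkm', hi', hx', hp'⟩ := mem_zigCodes hz'
    dsimp only at hk1 hkm hi hx hp hk1' hkm' hi' hx' hp'
    rw [Sym2.eq_iff] at hfeq
    rcases hfeq with ⟨rfl, rfl⟩ | ⟨rfl, rfl⟩
    · obtain ⟨rfl, rfl, rfl⟩ := zig_core hk1 hk1' hx hx'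
        (h2 ▸ h2') (h4 ▸ h4') (h1 ▸ h1') (h3 ▸ h3')
      rfl
    · exfalso
      rw [zc] at h2 h4 h2' h4'
      have e1 : (q + 1) * k = q * k + k := by ring
      have e2 : (q' + 1) * k' = q' * k' + k' := by ring
      omega
  done

end ZigB

section Lower

variable {m n ε : ℕ}

lemma strip_nonempty (hm : 4 ≤ m) (hε : ε ≤ 1) {a : ℕ} (ha : a + m ≤ n) :
    (strip m n ε a).Nonempty :=
  ⟨mkV ((ε + a) % 2) a (by omega) (by omega) (by omega),
    mem_strip.mpr (by constructor <;> simp <;> omega)⟩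

lemma strip_col_bound {t : ℕ} (ht : t < sumN m) (hnm : sumN m * m ≤ n) : t * m + m ≤ n := by
  have h1 : (t + 1) * m ≤ sumN m * m := Nat.mul_le_mul_right m (by omega)
  have h2 : (t + 1) * m = t * m + m := by ring
  omega

/-- The scramble whose eggs are `sumN m` disjoint width-`m` strips. -/
noncomputable def stripScramble (m n ε : ℕ) (hm : 4 ≤ m) (hε : ε ≤ 1)
    (hnm : sumN m * m ≤ n) : Scramble (pG m n ε) where
  eggs := (Finset.range (sumN m)).image fun t => strip m n ε (t * m)
  eggs_nonempty := by
    refine Finset.Nonempty.image ?_ _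
    rw [Finset.nonempty_range_iff]
    have := sumN_pos hm
    omega
  egg_nonempty := by
    intro E hE
    obtain ⟨t, ht, rfl⟩ := Finset.mem_image.mp hE
    rw [Finset.mem_range] at ht
    exact strip_nonempty hm hε (strip_col_bound ht hnm)
  egg_connected := by
    intro E hE
    obtain ⟨t, ht, rfl⟩ := Finset.mem_image.mp hE
    rw [Finset.mem_range] at ht
    exact strip_connected hm hε (strip_col_bound ht hnm)

lemma scrambleOrder_ge (hm : 4 ≤ m) (hε : ε ≤ 1) (hnm : sumN m * m ≤ n) :
    (sumN m : ℕ∞) ≤ scrambleOrder (stripScramble m n ε hm hε hnm) := by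
  rw [scrambleOrder, le_min_iff]
  constructor
  · -- hitting number
    refine le_sInf ?_
    rintro k ⟨H, hhit, rfl⟩
    rw [Nat.cast_le]
    have hch : ∀ t ∈ Finset.range (sumN m), ∃ v, v ∈ strip m n ε (t * m) ∧ v ∈ H := by
      intro t ht
      obtain ⟨v, hv⟩ := hhit _ (Finset.mem_image.mpr ⟨t, ht, rfl⟩)
      simp only [Finset.mem_inter] at hv
      exact ⟨v, hv.1, hv.2⟩
    choose g hg using hch
    have hinj := Finset.card_le_card_of_injOn
      (f := fun t : Finset.range (sumN m) => g t.val t.property)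
      (s := Finset.univ) (t := H) ?_ ?_
    · rw [Finset.card_univ, Fintype.card_coe, Finset.card_range] at hinj
      exact hinj
    · intro t _
      exact (hg t.val t.property).2
    · intro t _ t' _ heq
      have h1 := (hg t.val t.property).1
      have h2 := (hg t'.val t'.property).1
      rw [mem_strip] at h1 h2
      have htb := t.property
      have htb' := t'.property
      rw [Finset.mem_range] at htb htb'
      have heq' : g t.val t.property = g t'.val t'.property := heq
      apply Subtype.ext
      by_contra hne
      rcases Nat.lt_or_ge t.val t'.val with h | h
      · have : (t.val + 1) * m ≤ t'.val * m := Nat.mul_le_mul_right m (by omega)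
        have he : (t.val + 1) * m = t.val * m + m := by ring
        rw [heq'] at h1
        omega
      · have hlt : t'.val < t.val := by omega
        have : (t'.val + 1) * m ≤ t.val * m := Nat.mul_le_mul_right m (by omega)
        have he : (t'.val + 1) * m = t'.val * m + m := by ring
        rw [heq'] at h1
        omega
  · -- egg cut number
    refine le_sInf ?_
    rintro k ⟨F, hcut, rfl⟩
    rw [Nat.cast_le]
    obtain ⟨hsub, A, hA, B, hB, hAr, hBr, hAB⟩ := hcut
    obtain ⟨a, ha, rfl⟩ := Finset.mem_image.mp hA
    obtain ⟨b, hb, rfl⟩ := Finset.mem_image.mp hB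
    rw [Finset.mem_range] at ha hb
    exact cut_lower hm hε hnm F ha hb fun u v hu hv => hAB u hu v hv

lemma pG_scrambleNumber (hm : 4 ≤ m) (hme : Even m) (hε : ε ≤ 1) (hnm : sumN m * m ≤ n) :
    scrambleNumber (pG m n ε) = (sumN m : ℕ∞) := by
  apply le_antisymm
  · refine sSup_le ?_
    rintro k ⟨S, rfl⟩
    exact scrambleOrder_le hme hm S
  · have h1 := scrambleOrder_ge (n := n) hm hε hnm
    have h2 := scrambleOrder_le hme hm (stripScramble m n ε hm hε hnm)
    have h3 : scrambleOrder (stripScramble m n ε hm hε hnm) = (sumN m : ℕ∞) :=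
      le_antisymm h2 h1
    exact le_sSup ⟨stripScramble m n ε hm hε hnm, h3⟩

end Lower



/-- for m ≥ 4 even and n ≥ (1/6)(m−1)m²(m+1),
sn(B^w_{m×n}) = sn(B^b_{m×n}) = (1/6)(m−1)m(m+1).
(Divisibility by 6 is automatic, so natural division is exact; the hypothesis on n
is stated in the cross-multiplied form.) -/
theorem bishops_components_scramble (m n : ℕ) (hm : 4 ≤ m) (hme : Even m)
    (hn : (m - 1) * m ^ 2 * (m + 1) ≤ 6 * n) :
    scrambleNumber (bishopsWhite m n) = (((m - 1) * m * (m + 1) / 6 : ℕ) : ℕ∞) ∧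
    scrambleNumber (bishopsBlack m n) = (((m - 1) * m * (m + 1) / 6 : ℕ) : ℕ∞) := by
  have hnm : sumN m * m ≤ n := by
    have h6 := sumN_eq m
    have hr : (m - 1) * m ^ 2 * (m + 1) = ((m - 1) * m * (m + 1)) * m := by
      set a := m - 1
      ring
    have h66 : 6 * (sumN m * m) = ((m - 1) * m * (m + 1)) * m := by rw [← h6]; ring
    omega
  constructor
  · have hset : {v : Fin m × Fin n | Even (v.1.val + v.2.val)} = pSet m n 0 := by
      ext v
      simp [pSet, Nat.even_iff]
    rw [bishopsWhite, hset, ← sumN_div]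
    exact pG_scrambleNumber hm hme (by omega) hnm
  · have hset : {v : Fin m × Fin n | Odd (v.1.val + v.2.val)} = pSet m n 1 := by
      ext v
      simp [pSet, Nat.odd_iff]
    rw [bishopsBlack, hset, ← sumN_div]
    exact pG_scrambleNumber hm hme (by omega) hnm

end ChessGonality
end

section
/- For m,n ≥ 2, the m×n toroidal bishop's graph B^t_{m×n} is isomorphic to the complete graph on mn vertices if and only if gcd(m,n) = 1. -/
open Finset SimpleGraph
open scoped Classical

namespace ChessGonality

variable {V : Type*} [Fintype V]

/-- B^t_{m×n} is isomorphic to the complete graph on mn vertices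
iff gcd(m,n) = 1. -/
theorem toroidal_bishops_complete_iff (m n : ℕ) (hm : 2 ≤ m) (hn : 2 ≤ n) :
    Nonempty (toroidalBishopsGraph m n ≃g (⊤ : SimpleGraph (Fin (m * n)))) ↔
      Nat.gcd m n = 1 := by
  haveI : NeZero m := ⟨by omega⟩
  haveI : NeZero n := ⟨by omega⟩
  constructor
  · rintro ⟨f⟩
    set u : Fin m × Fin n := (⟨1, by omega⟩, ⟨0, by omega⟩)
    set v : Fin m × Fin n := (⟨0, by omega⟩, ⟨0, by omega⟩)
    have huv : u ≠ v := by simp [u, v, Prod.ext_iff, Fin.ext_iff]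
    have hadj : (toroidalBishopsGraph m n).Adj u v := by
      rw [← f.map_adj_iff]
      simp only [SimpleGraph.top_adj]
      exact fun h => huv (f.injective h)
    rw [toroidalBishopsGraph, SimpleGraph.fromRel_adj] at hadj
    obtain ⟨-, h⟩ := hadj
    -- from either case, get k with (k : ZMod m) = ±1 and (k : ZMod n) = 0
    have hk : ∃ k : ℤ, ((k : ZMod m) = 1 ∨ (k : ZMod m) = -1) ∧ (k : ZMod n) = 0 := by
      rcases h with ⟨k, h1, h2⟩ | ⟨k, h1, h2⟩
      · refine ⟨k, ?_, ?_⟩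
        · left
          simpa [u, v] using h1.symm
        · rcases h2 with h2 | h2
          · simpa [u, v] using h2.symm
          · have : -(k : ZMod n) = 0 := by simpa [u, v] using h2.symm
            linear_combination -this
      · refine ⟨k, ?_, ?_⟩
        · right
          have : (0 : ZMod m) - 1 = (k : ZMod m) := by simpa [u, v] using h1
          linear_combination -this
        · rcases h2 with h2 | h2
          · simpa [u, v] using h2.symm
          · have : -(k : ZMod n) = 0 := by simpa [u, v] using h2.symm
            linear_combination -this
    obtain ⟨k, h1, h2⟩ := hk
    have hdn : (n : ℤ) ∣ k := (ZMod.intCast_zmod_eq_zero_iff_dvd k n).mp h2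
    have hd : (Nat.gcd m n : ℤ) ∣ 1 := by
      have hgn : (Nat.gcd m n : ℤ) ∣ k :=
        dvd_trans (Int.natCast_dvd_natCast.mpr (Nat.gcd_dvd_right m n)) hdn
      rcases h1 with h1 | h1
      · have : (m : ℤ) ∣ k - 1 := by
          have : ((k - 1 : ℤ) : ZMod m) = 0 := by push_cast; rw [h1]; ring
          exact (ZMod.intCast_zmod_eq_zero_iff_dvd _ m).mp this
        have hgm : (Nat.gcd m n : ℤ) ∣ k - 1 :=
          dvd_trans (Int.natCast_dvd_natCast.mpr (Nat.gcd_dvd_left m n)) this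
        have := dvd_sub hgn hgm
        simpa using this
      · have : (m : ℤ) ∣ k + 1 := by
          have : ((k + 1 : ℤ) : ZMod m) = 0 := by push_cast; rw [h1]; ring
          exact (ZMod.intCast_zmod_eq_zero_iff_dvd _ m).mp this
        have hgm : (Nat.gcd m n : ℤ) ∣ k + 1 :=
          dvd_trans (Int.natCast_dvd_natCast.mpr (Nat.gcd_dvd_left m n)) this
        have := dvd_sub hgm hgn
        simpa using this
    have := Int.le_of_dvd one_pos hd
    have h1 : 1 ≤ Nat.gcd m n := Nat.one_le_iff_ne_zero.mpr (Nat.gcd_ne_zero_left (by omega))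
    omega
  · intro hgcd
    have hG : toroidalBishopsGraph m n = ⊤ := by
      ext x y
      simp only [toroidalBishopsGraph, SimpleGraph.fromRel_adj, SimpleGraph.top_adj]
      constructor
      · exact fun h => h.1
      · intro hxy
        refine ⟨hxy, Or.inl ?_⟩
        set a : ZMod m := (x.1.val : ZMod m) - (y.1.val : ZMod m) with ha
        set b : ZMod n := (x.2.val : ZMod n) - (y.2.val : ZMod n) with hb
        obtain ⟨c, hc1, hc2⟩ := Nat.chineseRemainder hgcd a.val b.val
        refine ⟨(c : ℤ), ?_, Or.inl ?_⟩
        · have : (c : ZMod m) = a := by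
            rw [(ZMod.natCast_eq_natCast_iff c a.val m).mpr hc1, ZMod.natCast_rightInverse a]
          push_cast
          exact this.symm
        · have : (c : ZMod n) = b := by
            rw [(ZMod.natCast_eq_natCast_iff c b.val n).mpr hc2, ZMod.natCast_rightInverse b]
          push_cast
          exact this.symm
    rw [hG]
    exact ⟨SimpleGraph.Iso.completeGraph finProdFinEquiv⟩

end ChessGonality
end

section
/- Let m,n ≥ 2 and consider diagonals on the vertex set of the m×n toroidal bishop's graph. (i) If m or n is odd, then every s-diagonal and every d-diagonal have a common vertex. (ii) If m and n are both even, then every s-diagonal intersects every d-diagonal of its color; that is, for vertices u = (a₁,b₁) and v = (a₂,b₂) with a₁+b₁ ≡ a₂+b₂ (mod 2), the d-diagonal through u and the s-diagonal through v have a common vertex. -/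
open Finset SimpleGraph
open scoped Classical

namespace ChessGonality

variable {V : Type*} [Fintype V]

lemma diag_key (m n : ℕ) (u v : ZMod m × ZMod n) (A B : ℤ)
    (hA : (A : ZMod m) = v.1 - u.1) (hB : (B : ZMod n) = v.2 - u.2)
    (hpar : A % 2 = B % 2) :
    ∃ p, p ∈ dDiagonal m n u ∧ p ∈ sDiagonal m n v := by
  obtain ⟨l, hl⟩ : ∃ l : ℤ, B - A = 2 * l := ⟨(B - A) / 2, by omega⟩
  set k : ℤ := A + l with hk
  refine ⟨(u.1 + (k : ZMod m), u.2 + (k : ZMod n)), ⟨k, rfl, rfl⟩, ⟨l, ?_, ?_⟩⟩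
  · show u.1 + (k : ZMod m) = v.1 + (l : ZMod m)
    have : (k : ZMod m) = (A : ZMod m) + (l : ZMod m) := by push_cast [hk]; ring
    rw [this, hA]; ring
  · show u.2 + (k : ZMod n) = v.2 - (l : ZMod n)
    have hkB : k = B - l := by omega
    have : (k : ZMod n) = (B : ZMod n) - (l : ZMod n) := by rw [hkB]; push_cast; ring
    rw [this, hB]; ring

/-- (i) if m or n is odd, every d-diagonal meets every s-diagonal;
(ii) if m and n are both even, every d-diagonal meets every s-diagonal of its color. -/
theorem toroidal_bishops_diagonals (m n : ℕ) (hm : 2 ≤ m) (hn : 2 ≤ n) :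
    ((Odd m ∨ Odd n) → ∀ u v : ZMod m × ZMod n,
      ∃ p, p ∈ dDiagonal m n u ∧ p ∈ sDiagonal m n v) ∧
    (Even m → Even n → ∀ u v : ZMod m × ZMod n,
      (u.1.val + u.2.val) % 2 = (v.1.val + v.2.val) % 2 →
      ∃ p, p ∈ dDiagonal m n u ∧ p ∈ sDiagonal m n v) := by
  haveI : NeZero m := ⟨by omega⟩
  haveI : NeZero n := ⟨by omega⟩
  constructor
  · rintro hodd u v
    set A : ℤ := (v.1.val : ℤ) - (u.1.val : ℤ) with hAdef
    set B : ℤ := (v.2.val : ℤ) - (u.2.val : ℤ) with hBdef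
    have hA : (A : ZMod m) = v.1 - u.1 := by simp [hAdef, ZMod.natCast_val, ZMod.cast_id]
    have hB : (B : ZMod n) = v.2 - u.2 := by simp [hBdef, ZMod.natCast_val, ZMod.cast_id]
    by_cases hpar : A % 2 = B % 2
    · exact diag_key m n u v A B hA hB hpar
    · rcases hodd with hm' | hn'
      · refine diag_key m n u v (A + m) B ?_ hB ?_
        · push_cast; simp [hA]
        · obtain ⟨t, ht⟩ := hm'; omega
      · refine diag_key m n u v A (B + n) hA ?_ ?_
        · push_cast; simp [hB]
        · obtain ⟨t, ht⟩ := hn'; omega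
  · rintro _ _ u v hc
    refine diag_key m n u v ((v.1.val : ℤ) - u.1.val) ((v.2.val : ℤ) - u.2.val) ?_ ?_ ?_
    · push_cast [ZMod.natCast_val, ZMod.cast_id]
      simp [ZMod.natCast_val, ZMod.cast_id]
    · push_cast [ZMod.natCast_val, ZMod.cast_id]
      simp [ZMod.natCast_val, ZMod.cast_id]
    · omega

end ChessGonality
end

section
/- For every n ≥ 2, the gonality of the 2×n knight's graph is gon(N_{2×n}) = 4. -/
open Finset SimpleGraph
open scoped Classical

namespace ChessGonality

variable {V : Type*} [Fintype V]

lemma knights2_adj_iff {n : ℕ} (u v : Fin 2 × Fin n) :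
    (knightsGraph 2 n).Adj u v ↔
      u.1.val ≠ v.1.val ∧ (u.2.val + 2 = v.2.val ∨ v.2.val + 2 = u.2.val) := by
  have h1 := u.1.isLt; have h2 := v.1.isLt
  have h3 := u.2.isLt; have h4 := v.2.isLt
  simp only [knightsGraph, fromRel_adj, ne_eq, Prod.ext_iff, Fin.ext_iff,
    abs_eq (by norm_num : (0:ℤ) ≤ 1), abs_eq (by norm_num : (0:ℤ) ≤ 2)]
  constructor
  · rintro ⟨hne, h⟩
    rcases h with (⟨hi, hj⟩ | ⟨hi, hj⟩) | (⟨hi, hj⟩ | ⟨hi, hj⟩) <;> omega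
  · rintro ⟨hi, hj⟩
    exact ⟨by omega, Or.inl (Or.inl ⟨by omega, by omega⟩)⟩



lemma knights2_adj_mk {n : ℕ} (w : Fin 2 × Fin n) (a : ℕ) (ha : a < 2) (b : ℕ) (hb : b < n)
    (h1 : w.1.val ≠ a) (h2 : w.2.val + 2 = b ∨ b + 2 = w.2.val) :
    (knightsGraph 2 n).Adj w (⟨a, ha⟩, ⟨b, hb⟩) := by
  rw [knights2_adj_iff]; exact ⟨h1, h2⟩

lemma knights2_lap_eq {n : ℕ} (f : Fin 2 × Fin n → ℤ) (w : Fin 2 × Fin n) :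
    lap (knightsGraph 2 n) f w =
      (if _ : 2 ≤ w.2.val then
        f w - f (⟨1 - w.1.val, by omega⟩, ⟨w.2.val - 2, by have := w.2.isLt; omega⟩) else 0) +
      (if h : w.2.val + 2 < n then
        f w - f (⟨1 - w.1.val, by omega⟩, ⟨w.2.val + 2, h⟩) else 0) := by
  classical
  have hw1 := w.1.isLt
  have hw2 := w.2.isLt
  have hval : ∀ x : Fin 2 × Fin n, (knightsGraph 2 n).Adj w x →
      (2 ≤ w.2.val ∧ x = (⟨1 - w.1.val, by omega⟩, ⟨w.2.val - 2, by omega⟩)) ∨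
      (∃ h : w.2.val + 2 < n, x = (⟨1 - w.1.val, by omega⟩, ⟨w.2.val + 2, h⟩)) := by
    intro x hadj
    rw [knights2_adj_iff] at hadj
    have h1 := x.1.isLt; have h2 := x.2.isLt
    obtain ⟨hi, hj | hj⟩ := hadj
    · refine Or.inr ⟨by omega, ?_⟩
      simp only [Prod.ext_iff, Fin.ext_iff]
      exact ⟨by omega, by omega⟩
    · refine Or.inl ⟨by omega, ?_⟩
      simp only [Prod.ext_iff, Fin.ext_iff]
      exact ⟨by omega, by omega⟩
  show (∑ x : Fin 2 × Fin n, if (knightsGraph 2 n).Adj w x then f w - f x else 0) = _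
  by_cases h1 : 2 ≤ w.2.val <;> by_cases h2 : w.2.val + 2 < n
  · rw [dif_pos h1, dif_pos h2]
    have hne : ((⟨1 - w.1.val, by omega⟩, ⟨w.2.val - 2, by omega⟩) : Fin 2 × Fin n) ≠
        (⟨1 - w.1.val, by omega⟩, ⟨w.2.val + 2, h2⟩) := fun h => by
      have h2' : w.2.val - 2 = w.2.val + 2 := congrArg (fun p : Fin 2 × Fin n => p.2.val) h
      omega
    have hadjm := knights2_adj_mk w (1 - w.1.val) (by omega) (w.2.val - 2) (by omega)
      (by omega) (by omega)
    have hadjp := knights2_adj_mk w (1 - w.1.val) (by omega) (w.2.val + 2) h2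
      (by omega) (by omega)
    rw [← Finset.sum_subset (Finset.subset_univ
      {((⟨1 - w.1.val, by omega⟩, ⟨w.2.val - 2, by omega⟩) : Fin 2 × Fin n),
       (⟨1 - w.1.val, by omega⟩, ⟨w.2.val + 2, h2⟩)}) ?_]
    · rw [Finset.sum_pair hne, if_pos hadjm, if_pos hadjp]
    · intro x _ hx
      simp only [Finset.mem_insert, Finset.mem_singleton, not_or] at hx
      rw [if_neg]
      intro hadj
      rcases hval x hadj with ⟨_, hx1⟩ | ⟨h, hx2⟩
      · exact hx.1 hx1
      · exact hx.2 hx2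
  · rw [dif_pos h1, dif_neg h2, add_zero]
    have hadjm := knights2_adj_mk w (1 - w.1.val) (by omega) (w.2.val - 2) (by omega)
      (by omega) (by omega)
    rw [← Finset.sum_subset (Finset.subset_univ
      {((⟨1 - w.1.val, by omega⟩, ⟨w.2.val - 2, by omega⟩) : Fin 2 × Fin n)}) ?_]
    · rw [Finset.sum_singleton, if_pos hadjm]
    · intro x _ hx
      simp only [Finset.mem_singleton] at hx
      rw [if_neg]
      intro hadj
      rcases hval x hadj with ⟨_, hx1⟩ | ⟨h, hx2⟩
      · exact hx hx1
      · exact h2 h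
  · rw [dif_neg h1, dif_pos h2, zero_add]
    have hadjp := knights2_adj_mk w (1 - w.1.val) (by omega) (w.2.val + 2) h2
      (by omega) (by omega)
    rw [← Finset.sum_subset (Finset.subset_univ
      {((⟨1 - w.1.val, by omega⟩, ⟨w.2.val + 2, h2⟩) : Fin 2 × Fin n)}) ?_]
    · rw [Finset.sum_singleton, if_pos hadjp]
    · intro x _ hx
      simp only [Finset.mem_singleton] at hx
      rw [if_neg]
      intro hadj
      rcases hval x hadj with ⟨h, _⟩ | ⟨h, hx2⟩
      · exact h1 h
      · exact hx hx2
  · rw [dif_neg h1, dif_neg h2, add_zero]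
    refine Finset.sum_eq_zero fun x _ => ?_
    rw [if_neg]
    intro hadj
    rcases hval x hadj with ⟨h, _⟩ | ⟨h, _⟩
    · exact h1 h
    · exact h2 h

lemma sum_lap_zero (G : SimpleGraph V) (f : V → ℤ) (S : Finset V)
    (hS : ∀ v ∈ S, ∀ w, G.Adj v w → w ∈ S) :
    ∑ v ∈ S, lap G f v = 0 := by
  classical
  have step1 : ∑ v ∈ S, lap G f v
      = ∑ v ∈ S, ∑ w ∈ S, (if G.Adj v w then f v - f w else 0) := by
    refine Finset.sum_congr rfl fun v hv => ?_
    simp only [lap]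
    exact (Finset.sum_subset (Finset.subset_univ S) fun w _ hw => by
      rw [if_neg]; intro hadj; exact hw (hS v hv w hadj)).symm
  rw [step1]
  have key : (∑ v ∈ S, ∑ w ∈ S, (if G.Adj v w then f v - f w else 0))
      = -(∑ v ∈ S, ∑ w ∈ S, (if G.Adj v w then f v - f w else 0)) := by
    calc (∑ v ∈ S, ∑ w ∈ S, (if G.Adj v w then f v - f w else 0))
        = ∑ w ∈ S, ∑ v ∈ S, (if G.Adj v w then f v - f w else 0) := Finset.sum_comm
      _ = ∑ v ∈ S, ∑ w ∈ S, (if G.Adj w v then f w - f v else 0) := rfl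
      _ = ∑ v ∈ S, ∑ w ∈ S, -(if G.Adj v w then f v - f w else 0) := by
          refine Finset.sum_congr rfl fun v _ => Finset.sum_congr rfl fun w _ => ?_
          by_cases h : G.Adj v w
          · rw [if_pos h, if_pos (G.adj_symm h)]; ring
          · rw [if_neg h, if_neg (fun h' => h (G.adj_symm h')), neg_zero]
      _ = -(∑ v ∈ S, ∑ w ∈ S, (if G.Adj v w then f v - f w else 0)) := by
          simp only [Finset.sum_neg_distrib]
  omega

def cls (n : ℕ) (v : Fin 2 × Fin n) : ℕ × ℕ := (v.2.val % 2, (v.1.val + v.2.val / 2) % 2)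

lemma cls_adj {n : ℕ} {u v : Fin 2 × Fin n} (h : (knightsGraph 2 n).Adj u v) :
    cls n u = cls n v := by
  rw [knights2_adj_iff] at h
  have h1 := u.1.isLt; have h2 := v.1.isLt
  simp only [cls, Prod.mk.injEq]
  omega

lemma knights2_lower {n : ℕ} (hn : 2 ≤ n) (D : Fin 2 × Fin n → ℤ)
    (hE : Effective D) (hP : PositiveRank (knightsGraph 2 n) D) :
    4 ≤ divisorDeg D := by
  classical
  have main : ∀ a b : ℕ, a < 2 → b < 2 →
      1 ≤ ∑ v ∈ Finset.univ.filter (fun v => cls n v = (b, a)), D v := by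
    intro a b ha hb
    obtain ⟨D', ⟨f, hf⟩, hD'eff, hD'v⟩ := hP (⟨a, ha⟩, ⟨b, by omega⟩)
    have hcls : cls n ((⟨a, ha⟩ : Fin 2), (⟨b, by omega⟩ : Fin n)) = (b, a) := by
      simp only [cls, Prod.mk.injEq]
      omega
    have hmem : ((⟨a, ha⟩ : Fin 2), (⟨b, by omega⟩ : Fin n)) ∈
        Finset.univ.filter (fun v => cls n v = (b, a)) :=
      Finset.mem_filter.mpr ⟨Finset.mem_univ _, hcls⟩
    have hsum0 : ∑ v ∈ Finset.univ.filter (fun v => cls n v = (b, a)), (D v - D' v) = 0 := by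
      have := sum_lap_zero (knightsGraph 2 n) f
        (Finset.univ.filter (fun v => cls n v = (b, a)))
        (fun v hv w hadj => Finset.mem_filter.mpr
          ⟨Finset.mem_univ _, by rw [← cls_adj hadj]; exact (Finset.mem_filter.mp hv).2⟩)
      rw [← this]
      exact Finset.sum_congr rfl fun v _ => hf v
    rw [Finset.sum_sub_distrib] at hsum0
    have hle : 1 ≤ ∑ v ∈ Finset.univ.filter (fun v => cls n v = (b, a)), D' v :=
      le_trans hD'v (Finset.single_le_sum (fun i _ => hD'eff i) hmem)
    omega
  have hmaps : ∀ v ∈ (Finset.univ : Finset (Fin 2 × Fin n)),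
      cls n v ∈ ({(0,0),(0,1),(1,0),(1,1)} : Finset (ℕ × ℕ)) := by
    intro v _
    simp only [cls, Finset.mem_insert, Finset.mem_singleton, Prod.mk.injEq]
    omega
  have hfib := Finset.sum_fiberwise_of_maps_to hmaps D
  rw [divisorDeg, ← hfib]
  have h4 : ∀ q ∈ ({(0,0),(0,1),(1,0),(1,1)} : Finset (ℕ × ℕ)),
      1 ≤ ∑ v ∈ Finset.univ.filter (fun v => cls n v = q), D v := by
    intro q hq
    simp only [Finset.mem_insert, Finset.mem_singleton] at hq
    rcases hq with h | h | h | h <;> subst h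
    · exact main 0 0 (by omega) (by omega)
    · exact main 1 0 (by omega) (by omega)
    · exact main 0 1 (by omega) (by omega)
    · exact main 1 1 (by omega) (by omega)
  calc (4:ℤ) = ∑ _q ∈ ({(0,0),(0,1),(1,0),(1,1)} : Finset (ℕ × ℕ)), 1 := by decide
    _ ≤ _ := Finset.sum_le_sum h4

set_option maxHeartbeats 3200000 in
lemma knights2_upper {n : ℕ} (hn : 2 ≤ n) :
    ∃ D : Fin 2 × Fin n → ℤ, Effective D ∧ PositiveRank (knightsGraph 2 n) D ∧
      divisorDeg D = 4 := by
  classical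
  refine ⟨fun x => if x.2.val < 2 then 1 else 0, fun x => by dsimp only; split <;> norm_num,
    ?_, ?_⟩
  · rintro ⟨⟨iv, hiv⟩, ⟨jv, hjv⟩⟩
    refine ⟨fun x => (if x.2.val < 2 then 1 else 0)
        + (if x = ((⟨iv, hiv⟩ : Fin 2), (⟨jv, hjv⟩ : Fin n)) then 1 else 0)
        - (if x = ((⟨(iv + jv / 2) % 2, by omega⟩ : Fin 2), (⟨jv % 2, by omega⟩ : Fin n))
            then 1 else 0),
      ⟨fun x => if (x.2.val % 2 = jv % 2 ∧ (x.1.val + x.2.val / 2) % 2 = (iv + jv / 2) % 2)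
          then -(min (x.2.val / 2) (jv / 2) : ℕ) else 0, ?_⟩, ?_, ?_⟩
    · rintro ⟨⟨i', hi'⟩, ⟨j', hj'⟩⟩
      rw [knights2_lap_eq]
      dsimp only
      simp only [Prod.mk.injEq, Fin.mk.injEq]
      split_ifs <;> push_cast <;> omega
    · rintro ⟨⟨i', hi'⟩, ⟨j', hj'⟩⟩
      dsimp only
      simp only [Prod.mk.injEq, Fin.mk.injEq]
      split_ifs <;> omega
    · dsimp only
      simp only [Prod.mk.injEq, Fin.mk.injEq]
      split_ifs <;> omega
  · rw [divisorDeg, Fintype.sum_prod_type]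
    have hinner : (∑ j : Fin n, if j.val < 2 then (1:ℤ) else 0) = 2 := by
      rw [Fin.sum_univ_eq_sum_range (fun k => if k < 2 then (1:ℤ) else 0)]
      rw [← Finset.sum_subset (Finset.range_subset_range.mpr hn)]
      · norm_num [Finset.sum_range_succ]
        decide
      · intro x hx hx2
        simp only [Finset.mem_range] at hx hx2
        rw [if_neg]; omega
    simp only [hinner]
    simp [Finset.sum_const]


/-- for n ≥ 2, gon(N_{2×n}) = 4. -/
theorem knights_2xn_gonality (n : ℕ) (hn : 2 ≤ n) :
    gonality (knightsGraph 2 n) = 4 := by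
  obtain ⟨D, hE, hP, hdeg⟩ := knights2_upper hn
  have h4 : 4 ∈ {k : ℕ | ∃ D : Fin 2 × Fin n → ℤ,
      Effective D ∧ PositiveRank (knightsGraph 2 n) D ∧ divisorDeg D = (k : ℤ)} :=
    ⟨D, hE, hP, by exact_mod_cast hdeg⟩
  refine le_antisymm (Nat.sInf_le h4) (le_csInf ⟨4, h4⟩ ?_)
  rintro k ⟨D', hE', hP', hdeg'⟩
  have h := knights2_lower hn D' hE' hP'
  rw [hdeg'] at h
  exact_mod_cast h


end ChessGonality
end

section
/- For knight's graphs N_{m×n} with m ≤ n: gon(N_{3×n}) ≤ 18 for all n ≥ 3, and gon(N_{m×n}) ≤ 10m − 12 for all 4 ≤ m ≤ n. -/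
open Finset SimpleGraph
open scoped Classical

namespace ChessGonality

variable {V : Type*} [Fintype V]

/- ===== auxiliary development for the knight's gonality bound ===== -/

/-- Row-count: number of rows at distance `k` from row `i` on a board with `M` rows. -/
def kR (M k i : ℕ) : ℤ := (if k ≤ i then 1 else 0) + (if i + k < M then 1 else 0)

/-- Column chip profile paired with the `±1`-column moves. -/
def kP (j : ℕ) : ℤ := if j = 1 then 1 else 0

/-- Column chip profile paired with the `±2`-column moves. -/
def kQ (j : ℕ) : ℤ := if j = 0 then 1 else if j = 1 then 2 else if j = 2 then 1 else 0

/-- The firing ramp towards target column `t`. -/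
def kG (t j : ℕ) : ℤ := max 0 ((t : ℤ) - max (j : ℤ) 1)

/-- Truncated distance-`k` column Laplacian of `Fc` at column `j` (board with `N` columns). -/
def kT (N : ℕ) (Fc : ℕ → ℤ) (k j : ℕ) : ℤ :=
  (if k ≤ j then Fc j - Fc (j - k) else 0) + (if j + k < N then Fc j - Fc (j + k) else 0)

lemma kR_nonneg (M k i : ℕ) : 0 ≤ kR M k i := by
  unfold kR; split_ifs <;> omega

lemma kR_one (M i : ℕ) (hM : 2 ≤ M) (hi : i < M) : 1 ≤ kR M 1 i := by
  unfold kR; split_ifs <;> omega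

lemma kP_nonneg (j : ℕ) : 0 ≤ kP j := by unfold kP; split_ifs <;> omega

lemma kQ_nonneg (j : ℕ) : 0 ≤ kQ j := by unfold kQ; split_ifs <;> omega

lemma kT1_le (n t j : ℕ) : kT n (kG t) 1 j ≤ kP j := by
  simp only [kT, kG, kP]; split_ifs <;> omega

lemma kT2_le (n t j : ℕ) : kT n (kG t) 2 j ≤ kQ j := by
  simp only [kT, kG, kQ]; split_ifs <;> omega

lemma kQt (n t : ℕ) : 1 ≤ kQ t - kT n (kG t) 2 t := by
  simp only [kT, kG, kQ]; split_ifs <;> omega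

lemma sum_ite_val {N : ℕ} (A : ℕ) (z : ℕ → ℤ) :
    (∑ b : Fin N, if b.val = A then z b.val else 0) = if A < N then z A else 0 := by
  by_cases h : A < N
  · rw [if_pos h, Finset.sum_eq_single (⟨A, h⟩ : Fin N)]
    · simp
    · intro b _ hb
      rw [if_neg]
      exact fun hv => hb (Fin.ext hv)
    · intro h'; exact absurd (Finset.mem_univ _) h'
  · rw [if_neg h]
    apply Finset.sum_eq_zero
    intro b _
    rw [if_neg]
    intro hv
    exact h (hv ▸ b.isLt)

lemma sum_pm {N : ℕ} (X k : ℕ) (hk : 1 ≤ k) (hX : X < N) (z : ℕ → ℤ) :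
    (∑ b : Fin N, if (X + k = b.val ∨ b.val + k = X) then z b.val else 0)
      = (if k ≤ X then z (X - k) else 0) + (if X + k < N then z (X + k) else 0) := by
  have step : ∀ b : Fin N, (if (X + k = b.val ∨ b.val + k = X) then z b.val else 0)
      = (if b.val = X + k then z b.val else 0) + (if b.val = X - k ∧ k ≤ X then z b.val else 0) := by
    intro b
    split_ifs <;> first | ring1 | (exfalso; omega)
  rw [Finset.sum_congr rfl (fun b _ => step b), Finset.sum_add_distrib, sum_ite_val (X + k) z]
  by_cases hkX : k ≤ X
  · have h2 : (∑ b : Fin N, if b.val = X - k ∧ k ≤ X then z b.val else 0)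
        = ∑ b : Fin N, if b.val = X - k then z b.val else 0 := by
      refine Finset.sum_congr rfl fun b _ => ?_
      simp [hkX]
    rw [h2, sum_ite_val (X - k) z, if_pos (show X - k < N by omega), if_pos hkX]
    ring
  · have h2 : (∑ b : Fin N, if b.val = X - k ∧ k ≤ X then z b.val else 0) = 0 := by
      refine Finset.sum_eq_zero fun b _ => ?_
      rw [if_neg]; tauto
    rw [h2, if_neg hkX]
    ring

lemma knights_adj (m n : ℕ) (x a : Fin m) (y b : Fin n) :
    (knightsGraph m n).Adj (x, y) (a, b) ↔
      (((x : ℕ) + 1 = a ∨ (a : ℕ) + 1 = x) ∧ ((y : ℕ) + 2 = b ∨ (b : ℕ) + 2 = y)) ∨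
      (((x : ℕ) + 2 = a ∨ (a : ℕ) + 2 = x) ∧ ((y : ℕ) + 1 = b ∨ (b : ℕ) + 1 = y)) := by
  have h1 : ∀ p q : ℕ, |(p : ℤ) - q| = 1 ↔ (p + 1 = q ∨ q + 1 = p) := by
    intro p q; rw [abs_eq (by norm_num : (0:ℤ) ≤ 1)]; omega
  have h2 : ∀ p q : ℕ, |(p : ℤ) - q| = 2 ↔ (p + 2 = q ∨ q + 2 = p) := by
    intro p q; rw [abs_eq (by norm_num : (0:ℤ) ≤ 2)]; omega
  simp only [knightsGraph, fromRel_adj, h1, h2, Ne, Prod.mk.injEq, Fin.ext_iff]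
  omega

lemma lap_eq (m n : ℕ) (Fc : ℕ → ℤ) (x : Fin m) (y : Fin n) :
    lap (knightsGraph m n) (fun w => Fc w.2.val) (x, y)
      = kR m 1 x.val * kT n Fc 2 y.val + kR m 2 x.val * kT n Fc 1 y.val := by
  simp only [lap]
  rw [Fintype.sum_prod_type]
  have key : ∀ (a : Fin m) (b : Fin n),
      (if (knightsGraph m n).Adj (x, y) (a, b) then Fc (y : ℕ) - Fc (b : ℕ) else 0)
        = (if ((x : ℕ) + 1 = a ∨ (a : ℕ) + 1 = x) then
            (if ((y : ℕ) + 2 = b ∨ (b : ℕ) + 2 = y) then Fc (y : ℕ) - Fc (b : ℕ) else 0) else 0)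
          + (if ((x : ℕ) + 2 = a ∨ (a : ℕ) + 2 = x) then
            (if ((y : ℕ) + 1 = b ∨ (b : ℕ) + 1 = y) then Fc (y : ℕ) - Fc (b : ℕ) else 0) else 0) := by
    intro a b
    rw [knights_adj]
    split_ifs <;> first | ring1 | (exfalso; omega)
  rw [Finset.sum_congr rfl (fun a _ => Finset.sum_congr rfl (fun b _ => key a b))]
  simp only [Finset.sum_add_distrib]
  have pull : ∀ (Pr : Prop) [Decidable Pr] (g : Fin n → ℤ),
      (∑ b : Fin n, if Pr then g b else 0) = if Pr then (∑ b : Fin n, g b) else 0 := by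
    intro Pr _ g; split_ifs <;> simp
  have T2 : (∑ b : Fin n, if ((y : ℕ) + 2 = b ∨ (b : ℕ) + 2 = y) then Fc (y : ℕ) - Fc (b : ℕ) else 0)
      = kT n Fc 2 y.val := by
    rw [sum_pm y.val 2 (by norm_num) y.isLt (fun c => Fc (y : ℕ) - Fc c)]
    rfl
  have T1 : (∑ b : Fin n, if ((y : ℕ) + 1 = b ∨ (b : ℕ) + 1 = y) then Fc (y : ℕ) - Fc (b : ℕ) else 0)
      = kT n Fc 1 y.val := by
    rw [sum_pm y.val 1 (by norm_num) y.isLt (fun c => Fc (y : ℕ) - Fc c)]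
    rfl
  have e1 : (∑ a : Fin m, ∑ b : Fin n,
      if ((x : ℕ) + 1 = a ∨ (a : ℕ) + 1 = x) then
        (if ((y : ℕ) + 2 = b ∨ (b : ℕ) + 2 = y) then Fc (y : ℕ) - Fc (b : ℕ) else 0) else 0)
      = kR m 1 x.val * kT n Fc 2 y.val := by
    have : ∀ a : Fin m, (∑ b : Fin n,
        if ((x : ℕ) + 1 = a ∨ (a : ℕ) + 1 = x) then
          (if ((y : ℕ) + 2 = b ∨ (b : ℕ) + 2 = y) then Fc (y : ℕ) - Fc (b : ℕ) else 0) else 0)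
        = (if ((x : ℕ) + 1 = a ∨ (a : ℕ) + 1 = x) then kT n Fc 2 y.val else 0) := by
      intro a; rw [pull, T2]
    rw [Finset.sum_congr rfl (fun a _ => this a),
        sum_pm x.val 1 (by norm_num) x.isLt (fun _ => kT n Fc 2 y.val)]
    unfold kR; split_ifs <;> ring
  have e2 : (∑ a : Fin m, ∑ b : Fin n,
      if ((x : ℕ) + 2 = a ∨ (a : ℕ) + 2 = x) then
        (if ((y : ℕ) + 1 = b ∨ (b : ℕ) + 1 = y) then Fc (y : ℕ) - Fc (b : ℕ) else 0) else 0)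
      = kR m 2 x.val * kT n Fc 1 y.val := by
    have : ∀ a : Fin m, (∑ b : Fin n,
        if ((x : ℕ) + 2 = a ∨ (a : ℕ) + 2 = x) then
          (if ((y : ℕ) + 1 = b ∨ (b : ℕ) + 1 = y) then Fc (y : ℕ) - Fc (b : ℕ) else 0) else 0)
        = (if ((x : ℕ) + 2 = a ∨ (a : ℕ) + 2 = x) then kT n Fc 1 y.val else 0) := by
      intro a; rw [pull, T1]
    rw [Finset.sum_congr rfl (fun a _ => this a),
        sum_pm x.val 2 (by norm_num) x.isLt (fun _ => kT n Fc 1 y.val)]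
    unfold kR; split_ifs <;> ring
  rw [e1, e2]

lemma sum_lt_ind (M c : ℕ) :
    (∑ i ∈ Finset.range M, if i < c then (1:ℤ) else 0) = ((min M c : ℕ) : ℤ) := by
  induction M with
  | zero => simp
  | succ M ih =>
    rw [Finset.sum_range_succ, ih]
    split_ifs <;> omega

lemma sum_ge_ind (M k : ℕ) :
    (∑ i ∈ Finset.range M, if k ≤ i then (1:ℤ) else 0) = ((M - k : ℕ) : ℤ) := by
  induction M with
  | zero => simp
  | succ M ih =>
    rw [Finset.sum_range_succ, ih]
    split_ifs <;> omega

lemma sum_kR (M k : ℕ) (h : k ≤ M) :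
    (∑ i ∈ Finset.range M, kR M k i) = 2 * ((M : ℤ) - k) := by
  unfold kR
  rw [Finset.sum_add_distrib, sum_ge_ind]
  have h2 : (∑ i ∈ Finset.range M, if i + k < M then (1:ℤ) else 0)
      = ∑ i ∈ Finset.range M, if i < M - k then (1:ℤ) else 0 := by
    refine Finset.sum_congr rfl fun i _ => ?_
    exact if_congr (by omega) rfl rfl
  rw [h2, sum_lt_ind]
  omega

lemma sum_kP (n : ℕ) (hn : 3 ≤ n) : (∑ j ∈ Finset.range n, kP j) = 1 := by
  rw [Finset.sum_eq_single_of_mem 1 (Finset.mem_range.mpr (by omega))]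
  · simp [kP]
  · intro b _ hb; simp [kP, hb]

lemma sum_kQ (n : ℕ) (hn : 3 ≤ n) : (∑ j ∈ Finset.range n, kQ j) = 4 := by
  rw [← Finset.sum_subset (Finset.range_subset_range.mpr hn)
      (fun x _ hx => by
        have : 3 ≤ x := by simpa using hx
        simp only [kQ]; split_ifs <;> omega)]
  simp [Finset.sum_range_succ, kQ]

lemma knights_gonality_main (m n : ℕ) (hm : 3 ≤ m) (hmn : m ≤ n) :
    gonality (knightsGraph m n) ≤ 10 * m - 12 := by
  have hn : 3 ≤ n := hm.trans hmn
  apply Nat.sInf_le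
  refine ⟨fun u => kR m 2 u.1.val * kP u.2.val + kR m 1 u.1.val * kQ u.2.val, ?_, ?_, ?_⟩
  · intro v
    exact add_nonneg (mul_nonneg (kR_nonneg _ _ _) (kP_nonneg _))
      (mul_nonneg (kR_nonneg _ _ _) (kQ_nonneg _))
  · rintro ⟨a0, b0⟩
    refine ⟨fun w => (kR m 2 w.1.val * kP w.2.val + kR m 1 w.1.val * kQ w.2.val)
        - lap (knightsGraph m n) (fun u => kG b0.val u.2.val) w,
      ⟨fun u => kG b0.val u.2.val, fun u => by dsimp only; ring⟩, ?_, ?_⟩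
    · rintro ⟨a, b⟩
      dsimp only
      rw [lap_eq]
      have e1 : (0:ℤ) ≤ kR m 2 a.val := kR_nonneg _ _ _
      have e2 : (0:ℤ) ≤ kR m 1 a.val := kR_nonneg _ _ _
      have e3 : kT n (kG b0.val) 1 b.val ≤ kP b.val := kT1_le _ _ _
      have e4 : kT n (kG b0.val) 2 b.val ≤ kQ b.val := kT2_le _ _ _
      nlinarith [mul_nonneg e1 (sub_nonneg.mpr e3), mul_nonneg e2 (sub_nonneg.mpr e4)]
    · dsimp only
      rw [lap_eq]
      have e1 : (0:ℤ) ≤ kR m 2 a0.val := kR_nonneg _ _ _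
      have e2 : (1:ℤ) ≤ kR m 1 a0.val := kR_one _ _ (by omega) a0.isLt
      have e3 : kT n (kG b0.val) 1 b0.val ≤ kP b0.val := kT1_le _ _ _
      have e4 : 1 ≤ kQ b0.val - kT n (kG b0.val) 2 b0.val := kQt _ _
      nlinarith [mul_nonneg e1 (sub_nonneg.mpr e3),
        mul_le_mul e2 e4 (by norm_num) (by linarith)]
  · simp only [divisorDeg]
    rw [Fintype.sum_prod_type]
    have inner : ∀ a : Fin m,
        (∑ b : Fin n, (kR m 2 a.val * kP b.val + kR m 1 a.val * kQ b.val))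
          = kR m 2 a.val * 1 + kR m 1 a.val * 4 := by
      intro a
      rw [Finset.sum_add_distrib, ← Finset.mul_sum, ← Finset.mul_sum,
          Fin.sum_univ_eq_sum_range (fun j => kP j) n,
          Fin.sum_univ_eq_sum_range (fun j => kQ j) n, sum_kP n hn, sum_kQ n hn]
    rw [Finset.sum_congr rfl (fun a _ => inner a), Finset.sum_add_distrib,
        ← Finset.sum_mul, ← Finset.sum_mul,
        Fin.sum_univ_eq_sum_range (fun i => kR m 2 i) m,
        Fin.sum_univ_eq_sum_range (fun i => kR m 1 i) m,
        sum_kR m 2 (by omega), sum_kR m 1 (by omega)]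
    have : ((10 * m - 12 : ℕ) : ℤ) = 10 * (m : ℤ) - 12 := by omega
    rw [this]; ring

/-- gon(N_{3×n}) ≤ 18 for n ≥ 3, and gon(N_{m×n}) ≤ 10m − 12
for 4 ≤ m ≤ n. -/
theorem knights_gonality_upper :
    (∀ n : ℕ, 3 ≤ n → gonality (knightsGraph 3 n) ≤ 18) ∧
    (∀ m n : ℕ, 4 ≤ m → m ≤ n → gonality (knightsGraph m n) ≤ 10 * m - 12) := by
  constructor
  · intro n hn
    have h := knights_gonality_main 3 n (by norm_num) hn
    norm_num at h
    exact h
  · intro m n hm hmn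
    exact knights_gonality_main m n (by omega) hmn

end ChessGonality
end
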